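/- arXiv:2310.10907 — 9 statements merged into one kernel-verified Lean document; each statement's English description precedes it below -/
import Mathlib

section
/- Let f : R^P → R be measurable and bounded on a neighborhood of x, and suppose f is constant along direction u ∈ R^P, i.e., f(y + t u) = f(y) for all y and t ∈ R. Then for every r > 0, uᵀ β_r(x) = 0, where β_r(x) = ((P+2)/r²) E_{z ~ Unif(B_r^P)}[z f(x+z)]. -/
open MeasureTheory Metric RealInnerProductSpace

theorem stmt4 (P : ℕ) (hP : 1 ≤ P) (f : EuclideanSpace ℝ (Fin P) → ℝ)
    (hmeas : Measurable f)
    (x u : EuclideanSpace ℝ (Fin P)) (hu : u ≠ 0)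
    (hbdd : ∃ s ∈ nhds x, ∃ C : ℝ, ∀ y ∈ s, |f y| ≤ C)
    (hconst : ∀ y : EuclideanSpace ℝ (Fin P), ∀ t : ℝ, f (y + t • u) = f y)
    (r : ℝ) (hr : 0 < r) :
    ⟪u, (((P : ℝ) + 2) / r ^ 2) •
        ⨍ z in closedBall (0 : EuclideanSpace ℝ (Fin P)) r, f (x + z) • z⟫ = 0 := by
  set B : Set (EuclideanSpace ℝ (Fin P)) := closedBall 0 r with hB
  set F : EuclideanSpace ℝ (Fin P) → EuclideanSpace ℝ (Fin P) :=
    fun z => f (x + z) • z with hF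
  rw [setAverage_eq, real_inner_smul_right, real_inner_smul_right]
  suffices h : ⟪u, ∫ z in B, F z⟫ = 0 by rw [h]; ring
  -- the reflection in the hyperplane orthogonal to u
  set K : Submodule ℝ (EuclideanSpace ℝ (Fin P)) := (ℝ ∙ u)ᗮ with hK
  have hKorth : Kᗮ = ℝ ∙ u := Submodule.orthogonal_orthogonal _
  have huK : u ∈ Kᗮ := by rw [hKorth]; exact Submodule.mem_span_singleton_self u
  set R := K.reflection with hR
  have hinner : ∀ z, ⟪u, R z⟫ = -⟪u, z⟫ := by
    intro z
    have h1 : ⟪u, K.starProjection z⟫ = 0 :=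
      Submodule.inner_left_of_mem_orthogonal (K.orthogonalProjectionOnto z).2 huK
    rw [hR, Submodule.reflection_apply, inner_sub_right, two_smul, inner_add_right, h1]
    ring
  have hf : ∀ z, f (x + R z) = f (x + z) := by
    intro z
    have hmem : R z - z ∈ ℝ ∙ u := by
      rw [← hKorth]
      have h2 : R z - z =
          (-2 : ℝ) • (z - K.starProjection z) := by
        rw [hR, Submodule.reflection_apply]; module
      rw [h2]
      exact Submodule.smul_mem _ _ (Submodule.sub_starProjection_mem_orthogonal z)
    obtain ⟨t, ht⟩ := Submodule.mem_span_singleton.mp hmem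
    have h3 : x + R z = (x + z) + t • u := by rw [ht]; abel
    rw [h3, hconst]
  -- g z := f (x+z) * ⟪u, z⟫ integrates to 0 on B by the reflection symmetry
  set g : EuclideanSpace ℝ (Fin P) → ℝ := fun z => f (x + z) * ⟪u, z⟫ with hg
  have hRB : (R : EuclideanSpace ℝ (Fin P) → EuclideanSpace ℝ (Fin P)) ⁻¹' B = B := by
    ext z
    simp [hB, mem_closedBall, dist_eq_norm]
  have hmp : MeasurePreserving
      (R : EuclideanSpace ℝ (Fin P) → EuclideanSpace ℝ (Fin P)) volume volume :=
    R.measurePreserving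
  have hint0 : ∫ z in B, g z = 0 := by
    have h1 : ∫ z in B, g (R z) = ∫ z in B, g z := by
      have := hmp.setIntegral_preimage_emb
        R.toHomeomorph.toMeasurableEquiv.measurableEmbedding g B
      rwa [hRB] at this
    have h2 : ∀ z, g (R z) = - g z := by
      intro z
      simp only [hg, hf z, hinner z, mul_neg]
    simp only [h2, integral_neg] at h1
    linarith
  by_cases hI : Integrable F (volume.restrict B)
  · have hcomm := (innerSL ℝ u).integral_comp_comm hI
    have : ⟪u, ∫ z in B, F z⟫ = ∫ z in B, (innerSL ℝ u) (F z) := hcomm.symm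
    rw [this]
    simpa [hg, hF, inner_smul_right, mul_comm] using hint0
  · rw [integral_undef hI]
    simp
end

section
/- Let f(x) = g(A x) be a ridge function with A ∈ R^{R×P}, R < P, and g : R^R → R measurable and bounded. Then for every x and every r > 0, β_r(x) ∈ Range(Aᵀ), where β_r(x) = ((P+2)/r²) E_{z ~ Unif(B_r^P)}[z f(x+z)]. -/
open MeasureTheory Metric

theorem stmt5 (P R : ℕ) (hR : 1 ≤ R) (hRP : R < P)
    (A : EuclideanSpace ℝ (Fin P) →ₗ[ℝ] EuclideanSpace ℝ (Fin R))
    (g : EuclideanSpace ℝ (Fin R) → ℝ) (hg : Measurable g)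
    (hb : ∃ C : ℝ, ∀ y, |g y| ≤ C)
    (x : EuclideanSpace ℝ (Fin P)) (r : ℝ) (hr : 0 < r) :
    (((P : ℝ) + 2) / r ^ 2) •
        (⨍ z in closedBall (0 : EuclideanSpace ℝ (Fin P)) r, g (A (x + z)) • z)
      ∈ LinearMap.range (LinearMap.adjoint A) := by
  classical
  set K : Submodule ℝ (EuclideanSpace ℝ (Fin P)) := LinearMap.ker A with hK
  -- range of adjoint is the orthogonal complement of the kernel
  have hker : K = (LinearMap.range (LinearMap.adjoint A))ᗮ := by
    ext v
    constructor
    · intro hv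
      intro u hu
      obtain ⟨w, rfl⟩ := hu
      rw [LinearMap.adjoint_inner_left]
      have : A v = 0 := hv
      rw [this, inner_zero_right]
    · intro hv
      have h1 : (inner ℝ (LinearMap.adjoint A (A v)) v : ℝ) = 0 :=
        hv _ ⟨A v, rfl⟩
      rw [LinearMap.adjoint_inner_left, inner_self_eq_zero] at h1
      exact h1
  have hrange : LinearMap.range (LinearMap.adjoint A) = Kᗮ := by
    rw [hker, Submodule.orthogonal_orthogonal]
  rw [hrange]
  -- reduce to integral membership
  rw [setAverage_eq]
  refine Submodule.smul_mem _ _ (Submodule.smul_mem _ _ ?_)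
  set B : Set (EuclideanSpace ℝ (Fin P)) := closedBall (0 : EuclideanSpace ℝ (Fin P)) r with hB
  -- integrability of the integrand
  obtain ⟨C, hC⟩ := hb
  have hAc : Continuous A := A.continuous_of_finiteDimensional
  have hmeas : Measurable fun z : EuclideanSpace ℝ (Fin P) => g (A (x + z)) • z :=
    ((hg.comp (hAc.measurable.comp (measurable_const.add measurable_id))).smul
      measurable_id)
  have hint : IntegrableOn (fun z : EuclideanSpace ℝ (Fin P) => g (A (x + z)) • z) B volume := by
    refine ⟨hmeas.aestronglyMeasurable.restrict, ?_⟩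
    refine HasFiniteIntegral.restrict_of_bounded (C := |C| * r)
      measure_closedBall_lt_top ?_
    refine (ae_restrict_iff' measurableSet_closedBall).2 (Filter.Eventually.of_forall ?_)
    intro z hz
    rw [norm_smul]
    have h1 : ‖g (A (x + z))‖ ≤ |C| := le_trans (hC _) (le_abs_self C)
    have h2 : ‖z‖ ≤ r := by simpa [dist_eq_norm] using hz
    exact mul_le_mul h1 h2 (norm_nonneg _) (abs_nonneg _)
  -- the reflection negating K and fixing Kᗮ
  set ρ : EuclideanSpace ℝ (Fin P) ≃ₗᵢ[ℝ] EuclideanSpace ℝ (Fin P) := Submodule.reflection Kᗮ with hρ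
  have hρK : ∀ v ∈ K, ρ v = -v := fun v hv =>
    Submodule.reflection_mem_subspace_orthogonal_precomplement_eq_neg hv
  have hAρ : ∀ z : EuclideanSpace ℝ (Fin P), A (ρ z) = A z := by
    intro z
    have hsplit : z = ((Submodule.orthogonalProjectionOnto K z : EuclideanSpace ℝ (Fin P))) + (z - Submodule.orthogonalProjectionOnto K z) := by
      abel
    have hmem1 : ((Submodule.orthogonalProjectionOnto K z : EuclideanSpace ℝ (Fin P))) ∈ K := (Submodule.orthogonalProjectionOnto K z).2
    have hmem2 : z - Submodule.orthogonalProjectionOnto K z ∈ Kᗮ :=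
      by exact K.sub_starProjection_mem_orthogonal z
    have hfix : ρ (z - Submodule.orthogonalProjectionOnto K z) = z - Submodule.orthogonalProjectionOnto K z :=
      Submodule.reflection_mem_subspace_eq_self hmem2
    calc A (ρ z) = A (ρ ((Submodule.orthogonalProjectionOnto K z : EuclideanSpace ℝ (Fin P))) + ρ (z - Submodule.orthogonalProjectionOnto K z)) := by
          rw [← map_add]; rw [← hsplit]
      _ = A (-(Submodule.orthogonalProjectionOnto K z : EuclideanSpace ℝ (Fin P)) + (z - Submodule.orthogonalProjectionOnto K z)) := by
          rw [hρK _ hmem1, hfix]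
      _ = A z := by
          rw [map_add, map_neg, map_sub]
          have h0 : A ((Submodule.orthogonalProjectionOnto K z : EuclideanSpace ℝ (Fin P))) = 0 := hmem1
          rw [h0]; simp
  -- ρ preserves volume and the ball
  have hmp : MeasurePreserving ρ (volume : Measure (EuclideanSpace ℝ (Fin P))) volume :=
    LinearIsometryEquiv.measurePreserving ρ
  have hemb : MeasurableEmbedding ρ := ρ.toHomeomorph.measurableEmbedding
  have hpre : ρ ⁻¹' B = B := by
    ext z
    simp only [Set.mem_preimage, hB, mem_closedBall, dist_zero_right]
    rw [ρ.norm_map]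
  -- membership in Kᗮ via vanishing inner products
  rw [Submodule.mem_orthogonal']
  intro u hu
  have hswap : (inner ℝ u (∫ z in B, g (A (x + z)) • z) : ℝ)
      = ∫ z in B, (inner ℝ u (g (A (x + z)) • z) : ℝ) := (integral_inner hint u).symm
  rw [real_inner_comm, hswap]
  have hρu : ρ u = -u := hρK u hu
  have key : (∫ z in B, (inner ℝ u (g (A (x + z)) • z) : ℝ))
      = -∫ z in B, (inner ℝ u (g (A (x + z)) • z) : ℝ) := by
    conv_lhs => rw [← hmp.setIntegral_preimage_emb hemb
      (fun z => (inner ℝ u (g (A (x + z)) • z) : ℝ)) B, hpre]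
    rw [← integral_neg]
    refine setIntegral_congr_fun measurableSet_closedBall ?_
    intro z _
    have h1 : A (x + ρ z) = A (x + z) := by
      rw [map_add, map_add, hAρ]
    show (inner ℝ u (g (A (x + ρ z)) • ρ z) : ℝ) = -(inner ℝ u (g (A (x + z)) • z) : ℝ)
    rw [h1, inner_smul_right, inner_smul_right]
    have h2 : (inner ℝ u (ρ z) : ℝ) = -(inner ℝ u z : ℝ) := by
      calc (inner ℝ u (ρ z) : ℝ) = inner ℝ (ρ u) (ρ (ρ z)) := by rw [ρ.inner_map_map]
        _ = inner ℝ (-u) z := by rw [hρu, Submodule.reflection_reflection]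
        _ = -(inner ℝ u z : ℝ) := by rw [inner_neg_left]
    rw [h2]
    ring
  have : (∫ z in B, (inner ℝ u (g (A (x + z)) • z) : ℝ)) = 0 := by linarith [key]
  rw [this]
end

section
/- Let f(x) = g(A x) be a bounded measurable ridge function with A ∈ R^{R×P}, and let μ be a probability measure on R^P. Then the range of the matrix B_{f,μ}^r = E_{x ~ μ}[β_r(x) β_r(x)ᵀ] is contained in the row space of A. -/
open MeasureTheory Metric RealInnerProductSpace

lemma range_adjoint_eq {E F : Type*} [NormedAddCommGroup E] [InnerProductSpace ℝ E]
    [NormedAddCommGroup F] [InnerProductSpace ℝ F] [FiniteDimensional ℝ E]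
    [FiniteDimensional ℝ F] (A : E →ₗ[ℝ] F) :
    LinearMap.range (LinearMap.adjoint A) = (LinearMap.ker A)ᗮ := by
  have h : (LinearMap.range (LinearMap.adjoint A))ᗮ = LinearMap.ker A := by
    ext v
    simp only [Submodule.mem_orthogonal, LinearMap.mem_range, LinearMap.mem_ker,
      forall_exists_index]
    constructor
    · intro h
      have h2 : ∀ y : F, ⟪y, A v⟫ = 0 := by
        intro y
        rw [← LinearMap.adjoint_inner_left]
        exact h _ y rfl
      simpa using h2 (A v)
    · rintro hv u y rfl
      rw [LinearMap.adjoint_inner_left, hv, inner_zero_right]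
  rw [← h, Submodule.orthogonal_orthogonal]

theorem stmt6 (P R : ℕ) (hR : 1 ≤ R)
    (A : EuclideanSpace ℝ (Fin P) →ₗ[ℝ] EuclideanSpace ℝ (Fin R))
    (g : EuclideanSpace ℝ (Fin R) → ℝ) (hg : Measurable g)
    (hb : ∃ C : ℝ, ∀ y, |g y| ≤ C)
    (μ : Measure (EuclideanSpace ℝ (Fin P))) [IsProbabilityMeasure μ]
    (r : ℝ) (hr : 0 < r) (v : EuclideanSpace ℝ (Fin P)) :
    (∫ x,
        ⟪(((P : ℝ) + 2) / r ^ 2) •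
            ⨍ z in closedBall (0 : EuclideanSpace ℝ (Fin P)) r, g (A (x + z)) • z, v⟫ •
          ((((P : ℝ) + 2) / r ^ 2) •
            ⨍ z in closedBall (0 : EuclideanSpace ℝ (Fin P)) r, g (A (x + z)) • z) ∂μ)
      ∈ LinearMap.range (LinearMap.adjoint A) := by
  rw [range_adjoint_eq]
  letI E := EuclideanSpace ℝ (Fin P)
  set S : Submodule ℝ (EuclideanSpace ℝ (Fin P)) := (LinearMap.ker A)ᗮ with hS
  set B : Set (EuclideanSpace ℝ (Fin P)) := closedBall (0 : EuclideanSpace ℝ (Fin P)) r with hB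
  -- the kernel average lies in S for every x
  have hβ : ∀ x : E, (⨍ z in B, g (A (x + z)) • z) ∈ S := by
    intro x
    rw [Submodule.mem_orthogonal]
    intro w hw
    rw [setAverage_eq, real_inner_smul_right]
    by_cases hint : IntegrableOn (fun z => g (A (x + z)) • z) B volume
    · rw [← integral_inner hint w]
      -- reflection across (ℝ ∙ w)ᗮ
      set T : E ≃ₗᵢ[ℝ] E := Submodule.reflection (ℝ ∙ w)ᗮ with hT
      have hTw : T w = -w := Submodule.reflection_orthogonalComplement_singleton_eq_neg w
      have hTinner : ∀ z : E, ⟪w, T z⟫ = -⟪w, z⟫ := by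
        intro z
        have h1 : ⟪T w, T z⟫ = ⟪w, z⟫ := LinearIsometryEquiv.inner_map_map T w z
        rw [hTw, inner_neg_left] at h1
        linarith
      have hAT : ∀ z : E, A (x + T z) = A (x + z) := by
        intro z
        have hmem : (T z : E) - z ∈ (ℝ ∙ w) := by
          have h1 : (T z : E) - z
              = (2:ℝ) • ((Submodule.starProjection (ℝ ∙ w)ᗮ z : E) - z) := by
            rw [hT, Submodule.reflection_apply]
            module
          have h2 : (Submodule.starProjection (ℝ ∙ w)ᗮ z : E) - z ∈ ((ℝ ∙ w)ᗮ)ᗮ := by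
            have := Submodule.sub_starProjection_mem_orthogonal (K := (ℝ ∙ w)ᗮ) z
            simpa using Submodule.neg_mem _ this
          rw [Submodule.orthogonal_orthogonal] at h2
          rw [h1]
          exact Submodule.smul_mem _ _ h2
        obtain ⟨c, hc⟩ := Submodule.mem_span_singleton.1 hmem
        have : (T z : E) = z + c • w := by rw [hc]; abel
        rw [this]
        have hw0 : A w = 0 := hw
        simp [map_add, LinearMap.map_smul, hw0]
      have hkey : ∫ z in B, ⟪w, g (A (x + z)) • z⟫ ∂volume
          = - ∫ z in B, ⟪w, g (A (x + z)) • z⟫ ∂volume := by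
        have hmp := LinearIsometryEquiv.measurePreserving T
        have hemb := T.toHomeomorph.toMeasurableEquiv.measurableEmbedding
        have hTB : T ⁻¹' B = B := by
          ext z
          simp only [Set.mem_preimage, hB, mem_closedBall, dist_zero_right]
          rw [T.norm_map]
        calc ∫ z in B, ⟪w, g (A (x + z)) • z⟫ ∂volume
            = ∫ z in T ⁻¹' B, ⟪w, g (A (x + T z)) • T z⟫ ∂volume := by
              rw [hmp.setIntegral_preimage_emb hemb (fun z => ⟪w, g (A (x + z)) • z⟫) B]
          _ = ∫ z in B, -⟪w, g (A (x + z)) • z⟫ ∂volume := by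
              rw [hTB]
              refine setIntegral_congr_fun (measurableSet_closedBall) (fun z _ => ?_)
              rw [hAT z, real_inner_smul_right, real_inner_smul_right, hTinner z]
              ring
          _ = - ∫ z in B, ⟪w, g (A (x + z)) • z⟫ ∂volume := by rw [integral_neg]
      have h0 : ∫ z in B, ⟪w, g (A (x + z)) • z⟫ ∂volume = 0 := by linarith
      rw [h0, mul_zero]
    · rw [integral_undef hint, inner_zero_right, mul_zero]
  -- hence each integrand lies in S
  have hmemS : ∀ x : E,
      (⟪(((P : ℝ) + 2) / r ^ 2) • ⨍ z in B, g (A (x + z)) • z, v⟫ •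
        ((((P : ℝ) + 2) / r ^ 2) • ⨍ z in B, g (A (x + z)) • z)) ∈ S := by
    intro x
    exact Submodule.smul_mem _ _ (Submodule.smul_mem _ _ (hβ x))
  set F : E → E := fun x =>
    ⟪(((P : ℝ) + 2) / r ^ 2) • ⨍ z in B, g (A (x + z)) • z, v⟫ •
      ((((P : ℝ) + 2) / r ^ 2) • ⨍ z in B, g (A (x + z)) • z) with hF
  show (∫ x, F x ∂μ) ∈ S
  by_cases hFi : Integrable F μ
  · set L : E →L[ℝ] E := S.subtypeL.comp (Submodule.orthogonalProjectionOnto S) with hL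
    have hLF : ∀ x, L (F x) = F x := by
      intro x
      simp only [hL, ContinuousLinearMap.comp_apply, Submodule.subtypeL_apply]
      exact Submodule.starProjection_eq_self_iff.2 (hmemS x)
    have : ∫ x, F x ∂μ = L (∫ x, F x ∂μ) := by
      rw [← L.integral_comp_comm hFi]
      simp_rw [hLF]
      rfl
    rw [this]
    simp only [hL, ContinuousLinearMap.comp_apply, Submodule.subtypeL_apply]
    exact Submodule.coe_mem _
  · rw [integral_undef hFi]
    exact Submodule.zero_mem S
end

section
/- Let f : R^P → R be continuously differentiable with bounded gradient, and let μ be a probability measure on a compact set X ⊂ R^P. Then lim_{r→0} E_{x~μ}[β_r(x) β_r(x)ᵀ] = E_{x~μ}[∇f(x) ∇f(x)ᵀ] = C_{f,μ}, the active subspace matrix. -/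
set_option maxHeartbeats 1000000

open MeasureTheory Metric Set
open scoped InnerProductSpace

variable {P : ℕ}

local notation "E" => EuclideanSpace ℝ (Fin P)

lemma setInt_comp_isometry {F : Type*} [NormedAddCommGroup F] [NormedSpace ℝ F]
    (e : E ≃ₗᵢ[ℝ] E) (r : ℝ) (g : E → F) :
    ∫ z in closedBall (0 : E) r, g (e z) = ∫ z in closedBall (0 : E) r, g z := by
  have hpre : e ⁻¹' (closedBall (0 : E) r) = closedBall (0 : E) r := by
    ext z
    simp [mem_closedBall, dist_zero_right, e.norm_map]
  have := e.measurePreserving.setIntegral_preimage_emb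
    (e.toHomeomorph.measurableEmbedding) g (closedBall (0 : E) r)
  rw [hpre] at this
  exact this

lemma integrableOn_cb {F : Type*} [NormedAddCommGroup F] [NormedSpace ℝ F]
    {g : E → F} (hg : Continuous g) (r : ℝ) :
    IntegrableOn g (closedBall (0 : E) r) :=
  hg.continuousOn.integrableOn_compact (isCompact_closedBall _ _)

-- first moment vanishes
lemma int_ball_id (r : ℝ) : ∫ z in closedBall (0 : E) r, z = 0 := by
  have h := setInt_comp_isometry
    (LinearIsometryEquiv.neg ℝ : EuclideanSpace ℝ (Fin P) ≃ₗᵢ[ℝ] EuclideanSpace ℝ (Fin P)) r id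
  simp only [LinearIsometryEquiv.coe_neg, id_eq] at h
  rw [integral_neg] at h
  have h2 : (2:ℝ) • (∫ (z : E) in closedBall 0 r, z) = 0 := by
    rw [two_smul]; nth_rewrite 1 [← h]; simp
  simpa using h2

lemma int_ball_mul_off (r : ℝ) {i j : Fin P} (hij : i ≠ j) :
    ∫ z in closedBall (0 : E) r, z i * z j = 0 := by
  classical
  set e : EuclideanSpace ℝ (Fin P) ≃ₗᵢ[ℝ] EuclideanSpace ℝ (Fin P) :=
    LinearIsometryEquiv.piLpCongrRight 2
      (fun k : Fin P => if k = i then LinearIsometryEquiv.neg ℝ else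
        LinearIsometryEquiv.refl ℝ ℝ) with he
  have happ : ∀ (z : EuclideanSpace ℝ (Fin P)) (k : Fin P),
      e z k = if k = i then -z k else z k := by
    intro z k
    rw [he]
    by_cases hk : k = i
    · subst hk; simp [LinearIsometryEquiv.piLpCongrRight_apply]
    · simp [LinearIsometryEquiv.piLpCongrRight_apply, hk]
  have h := setInt_comp_isometry e r (fun z => z i * z j)
  simp only [happ, if_pos rfl, if_true, eq_self_iff_true, if_neg (Ne.symm hij), neg_mul] at h
  rw [integral_neg] at h
  linarith [h]

lemma cont_coord (i : Fin P) : Continuous (fun z : EuclideanSpace ℝ (Fin P) => z i) :=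
  (EuclideanSpace.proj (𝕜 := ℝ) i).continuous

lemma int_ball_sq_eq (r : ℝ) (i j : Fin P) :
    ∫ z in closedBall (0 : E) r, (z i)^2 = ∫ z in closedBall (0 : E) r, (z j)^2 := by
  have h := setInt_comp_isometry
    (LinearIsometryEquiv.piLpCongrLeft 2 ℝ ℝ (Equiv.swap i j)) r (fun z => (z i)^2)
  have happ : ∀ z : EuclideanSpace ℝ (Fin P),
      (LinearIsometryEquiv.piLpCongrLeft 2 ℝ ℝ (Equiv.swap i j)) z i = z j := by
    intro z
    simp [LinearIsometryEquiv.piLpCongrLeft_apply, Equiv.piCongrLeft'_apply,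
      Equiv.symm_swap, Equiv.swap_apply_left, Equiv.piCongrLeft']
  simp only [happ] at h
  exact h.symm

lemma nontrivial_E (hP : 1 ≤ P) : Nontrivial (EuclideanSpace ℝ (Fin P)) := by
  haveI : Nonempty (Fin P) := Fin.pos_iff_nonempty.mp hP
  infer_instance

lemma int_ball_normsq (hP : 1 ≤ P) {r : ℝ} (hr : 0 < r) :
    ∫ z in closedBall (0 : E) r, ‖z‖^2
      = P * (volume (ball (0 : E) 1)).toReal * (r^(P+2) / (P+2)) := by
  haveI : Nontrivial (EuclideanSpace ℝ (Fin P)) := nontrivial_E hP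
  have hfin : Module.finrank ℝ (EuclideanSpace ℝ (Fin P)) = P := finrank_euclideanSpace_fin
  have key : ∫ z in closedBall (0 : E) r, ‖z‖^2
      = ∫ z : EuclideanSpace ℝ (Fin P), (Icc (0:ℝ) r).indicator (fun y => y^2) ‖z‖ := by
    rw [← integral_indicator measurableSet_closedBall]
    congr 1
    funext z
    by_cases hz : z ∈ closedBall (0 : E) r
    · rw [indicator_of_mem hz, indicator_of_mem]
      exact ⟨norm_nonneg z, by simpa [mem_closedBall, dist_zero_right] using hz⟩
    · rw [indicator_of_notMem hz, indicator_of_notMem]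
      intro hmem
      exact hz (by simpa [mem_closedBall, dist_zero_right] using hmem.2)
  rw [key, integral_fun_norm_addHaar volume (fun y => (Icc (0:ℝ) r).indicator (fun y => y^2) y),
    hfin]
  have h1 : ∫ y in Set.Ioi (0:ℝ), y ^ (P - 1) • (Icc (0:ℝ) r).indicator (fun y => y^2) y
      = r^(P+2) / (P+2) := by
    have : ∀ y : ℝ, y ^ (P - 1) • (Icc (0:ℝ) r).indicator (fun y => y^2) y
        = (Icc (0:ℝ) r).indicator (fun y => y^(P-1) * y^2) y := by
      intro y
      by_cases hy : y ∈ Icc (0:ℝ) r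
      · rw [indicator_of_mem hy, indicator_of_mem hy, smul_eq_mul]
      · rw [indicator_of_notMem hy, indicator_of_notMem hy, smul_zero]
    simp_rw [this]
    rw [setIntegral_indicator measurableSet_Icc]
    have hset : Set.Ioi (0:ℝ) ∩ Icc (0:ℝ) r = Set.Ioc (0:ℝ) r := by
      ext y
      simp only [Set.mem_inter_iff, Set.mem_Ioi, Set.mem_Icc, Set.mem_Ioc]
      constructor
      · rintro ⟨h1, _, h3⟩; exact ⟨h1, h3⟩
      · rintro ⟨h1, h2⟩; exact ⟨h1, le_of_lt h1, h2⟩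
    rw [hset]
    have hpow : ∀ y : ℝ, y^(P-1) * y^2 = y^(P+1) := by
      intro y
      rw [← pow_add]
      congr 1
      omega
    simp_rw [hpow]
    rw [← intervalIntegral.integral_of_le hr.le, integral_pow]
    push_cast
    ring_nf
  rw [h1]
  simp only [nsmul_eq_mul, smul_eq_mul]
  rw [measureReal_def]
  ring

lemma int_ball_sq (hP : 1 ≤ P) {r : ℝ} (hr : 0 < r) (i : Fin P) :
    ∫ z in closedBall (0 : E) r, (z i)^2
      = (volume (ball (0 : E) 1)).toReal * (r^(P+2) / (P+2)) := by
  have hsum : ∑ j : Fin P, ∫ z in closedBall (0 : E) r, (z j)^2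
      = ∫ z in closedBall (0 : E) r, ‖z‖^2 := by
    rw [← integral_finset_sum]
    · apply setIntegral_congr_fun measurableSet_closedBall
      intro z _
      show ∑ j : Fin P, z j ^ 2 = ‖z‖ ^ 2
      rw [EuclideanSpace.norm_eq, Real.sq_sqrt (Finset.sum_nonneg fun j _ => sq_nonneg _)]
      exact Finset.sum_congr rfl fun j _ => by rw [Real.norm_eq_abs, sq_abs]
    · intro j _
      exact integrableOn_cb (((cont_coord j)).pow 2) r
  have hall : ∀ j : Fin P, ∫ z in closedBall (0 : E) r, (z j)^2
      = ∫ z in closedBall (0 : E) r, (z i)^2 := fun j => int_ball_sq_eq r j i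
  rw [Finset.sum_congr rfl fun j _ => hall j, Finset.sum_const, Finset.card_univ,
    Fintype.card_fin, int_ball_normsq hP hr] at hsum
  have hPpos : (0:ℝ) < P := by exact_mod_cast hP
  rw [nsmul_eq_mul] at hsum
  exact mul_left_cancel₀ hPpos.ne' (by rw [← mul_assoc]; exact hsum)

lemma int_ball_mul (hP : 1 ≤ P) {r : ℝ} (hr : 0 < r) (i j : Fin P) :
    ∫ z in closedBall (0 : E) r, z i * z j
      = if i = j then (volume (ball (0 : E) 1)).toReal * (r^(P+2) / (P+2)) else 0 := by
  by_cases hij : i = j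
  · subst hij
    rw [if_pos rfl, ← int_ball_sq hP hr i]
    apply setIntegral_congr_fun measurableSet_closedBall
    intro z _
    exact (sq (z i)).symm
  · rw [if_neg hij]
    exact int_ball_mul_off r hij

lemma integral_coord {r : ℝ} {g : EuclideanSpace ℝ (Fin P) → EuclideanSpace ℝ (Fin P)}
    (hg : IntegrableOn g (closedBall (0 : E) r)) (i : Fin P) :
    (∫ z in closedBall (0 : E) r, g z) i = ∫ z in closedBall (0 : E) r, g z i :=
  ((EuclideanSpace.proj (𝕜 := ℝ) i).integral_comp_comm hg).symm

lemma vol_cb (hP : 1 ≤ P) {r : ℝ} (hr : 0 < r) :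
    (volume (closedBall (0 : E) r)).toReal
      = r ^ P * (volume (ball (0 : E) 1)).toReal := by
  rw [Measure.addHaar_closedBall volume (0 : E) hr.le, finrank_euclideanSpace_fin,
    ENNReal.toReal_mul, ENNReal.toReal_ofReal (pow_nonneg hr.le P)]

lemma vol_b1_pos (hP : 1 ≤ P) : 0 < (volume (ball (0 : E) 1)).toReal := by
  haveI : Nontrivial (EuclideanSpace ℝ (Fin P)) := nontrivial_E hP
  exact ENNReal.toReal_pos (measure_ball_pos volume 0 one_pos).ne' measure_ball_lt_top.ne

lemma avg_inner (hP : 1 ≤ P) {r : ℝ} (hr : 0 < r) (v : EuclideanSpace ℝ (Fin P)) :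
    (((P : ℝ) + 2) / r ^ 2) •
      ⨍ z in closedBall (0 : E) r, (inner ℝ v z : ℝ) • z = v := by
  rw [setAverage_eq]
  ext i
  have hint : IntegrableOn (fun z : EuclideanSpace ℝ (Fin P) => (inner ℝ v z : ℝ) • z)
      (closedBall (0 : E) r) :=
    integrableOn_cb ((continuous_const.inner continuous_id).fun_smul continuous_id) r
  show (((P : ℝ) + 2) / r ^ 2) * ((volume (closedBall (0 : E) r)).toReal⁻¹ *
      ((∫ z in closedBall (0 : E) r, (inner ℝ v z : ℝ) • z) i)) = v i
  rw [integral_coord hint i]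
  have h1 : ∀ z : EuclideanSpace ℝ (Fin P), ((inner ℝ v z : ℝ) • z) i
      = ∑ k : Fin P, v k * (z k * z i) := by
    intro z
    show (inner ℝ v z : ℝ) * z i = _
    rw [PiLp.inner_apply]
    simp only [RCLike.inner_apply, conj_trivial]
    rw [Finset.sum_mul]
    exact Finset.sum_congr rfl fun k _ => by ring
  simp_rw [h1]
  rw [integral_finset_sum _ (fun k _ =>
    (integrableOn_cb (continuous_const.fun_mul ((cont_coord k).fun_mul (cont_coord i))) r))]
  have h2 : ∀ k : Fin P, ∫ z in closedBall (0 : E) r, v k * (z k * z i)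
      = v k * ∫ z in closedBall (0 : E) r, z k * z i := fun k => integral_const_mul _ _
  simp_rw [h2, int_ball_mul hP hr]
  rw [Finset.sum_eq_single i]
  · rw [if_pos rfl, vol_cb hP hr]
    have hB := vol_b1_pos hP
    have hP2 : (0:ℝ) < (P:ℝ) + 2 := by positivity
    field_simp
    ring
  · intro k _ hk
    rw [if_neg hk, mul_zero]
  · intro h; exact absurd (Finset.mem_univ i) h

lemma taylor_bound {f : EuclideanSpace ℝ (Fin P) → ℝ} (hf : ContDiff ℝ 1 f)
    {x z : EuclideanSpace ℝ (Fin P)} {ε : ℝ}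
    (hb : ∀ t : ℝ, t ∈ Icc (0:ℝ) 1 →
      ‖gradient f (x + t • z) - gradient f x‖ ≤ ε) :
    |f (x + z) - f x - (inner ℝ (gradient f x) z : ℝ)| ≤ ε * ‖z‖ := by
  set v := gradient f x with hv
  set φ : EuclideanSpace ℝ (Fin P) → ℝ :=
    fun y => f y - (InnerProductSpace.toDual ℝ (EuclideanSpace ℝ (Fin P)) v) y with hφ
  set Φ : EuclideanSpace ℝ (Fin P) → (EuclideanSpace ℝ (Fin P) →L[ℝ] ℝ) :=
    fun y => InnerProductSpace.toDual ℝ (EuclideanSpace ℝ (Fin P)) (gradient f y)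
      - InnerProductSpace.toDual ℝ (EuclideanSpace ℝ (Fin P)) v with hΦ
  have hseg : Convex ℝ (segment ℝ x (x + z)) := convex_segment _ _
  have hderiv : ∀ y ∈ segment ℝ x (x + z),
      HasFDerivWithinAt φ (Φ y) (segment ℝ x (x + z)) y := by
    intro y _
    have h1 : HasFDerivAt f
        (InnerProductSpace.toDual ℝ (EuclideanSpace ℝ (Fin P)) (gradient f y)) y := by
      have := ((hf.differentiable one_ne_zero) y).hasGradientAt
      rwa [hasGradientAt_iff_hasFDerivAt] at this
    have h2 : HasFDerivAt
        (fun y => (InnerProductSpace.toDual ℝ (EuclideanSpace ℝ (Fin P)) v) y)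
        (InnerProductSpace.toDual ℝ (EuclideanSpace ℝ (Fin P)) v) y :=
      (InnerProductSpace.toDual ℝ (EuclideanSpace ℝ (Fin P)) v).hasFDerivAt
    exact ((h1.sub h2).hasFDerivWithinAt)
  have hbound : ∀ y ∈ segment ℝ x (x + z), ‖Φ y‖ ≤ ε := by
    intro y hy
    rw [segment_eq_image'] at hy
    obtain ⟨t, ht, rfl⟩ := hy
    have : Φ (x + t • (x + z - x)) = InnerProductSpace.toDual ℝ (EuclideanSpace ℝ (Fin P))
        (gradient f (x + t • (x + z - x)) - v) := by
      rw [hΦ, map_sub]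
    rw [this, LinearIsometryEquiv.norm_map]
    have hz : x + z - x = z := by abel
    rw [hz] at *
    exact hb t ht
  have := hseg.norm_image_sub_le_of_norm_hasFDerivWithin_le hderiv hbound
    (left_mem_segment ℝ x (x + z)) (right_mem_segment ℝ x (x + z))
  have hφ2 : φ (x + z) - φ x = f (x + z) - f x - (inner ℝ v z : ℝ) := by
    rw [hφ]
    simp only [InnerProductSpace.toDual_apply_apply]
    rw [inner_add_right]
    ring
  rw [Real.norm_eq_abs, hφ2] at this
  simpa using this

lemma vol_cb_pos (hP : 1 ≤ P) {r : ℝ} (hr : 0 < r) :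
    0 < (volume (closedBall (0 : E) r)).toReal := by
  rw [vol_cb hP hr]
  exact mul_pos (pow_pos hr P) (vol_b1_pos hP)

lemma beta_sub_grad (hP : 1 ≤ P) {r : ℝ} (hr : 0 < r)
    {f : EuclideanSpace ℝ (Fin P) → ℝ} (hf : Continuous f)
    (x v : EuclideanSpace ℝ (Fin P)) {ε : ℝ} (hε0 : 0 ≤ ε)
    (hε : ∀ z : EuclideanSpace ℝ (Fin P), ‖z‖ ≤ r →
      |f (x + z) - f x - (inner ℝ v z : ℝ)| ≤ ε * ‖z‖) :
    ‖(((P : ℝ) + 2) / r ^ 2) • (⨍ z in closedBall (0 : E) r, f (x + z) • z) - v‖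
      ≤ ((P : ℝ) + 2) * ε := by
  set c : ℝ := ((P : ℝ) + 2) / r ^ 2 with hc
  set V : ℝ := (volume (closedBall (0 : E) r)).toReal with hV
  have hVpos : 0 < V := vol_cb_pos hP hr
  have hcpos : 0 < c := by positivity
  have hFc : Continuous (fun z : EuclideanSpace ℝ (Fin P) => f (x + z) • z) :=
    ((hf.comp (continuous_const.add continuous_id)).smul continuous_id)
  have hFint := integrableOn_cb hFc r
  have hGc : Continuous (fun z : EuclideanSpace ℝ (Fin P) => (inner ℝ v z : ℝ) • z) :=
    ((continuous_const.inner continuous_id).fun_smul continuous_id)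
  have hGint := integrableOn_cb hGc r
  have hhc : Continuous (fun z : EuclideanSpace ℝ (Fin P) =>
      (f (x + z) - f x - (inner ℝ v z : ℝ)) • z) :=
    (((hf.comp (continuous_const.add continuous_id)).sub continuous_const).sub
      (continuous_const.inner continuous_id)).fun_smul continuous_id
  have hhint := integrableOn_cb hhc r
  have hsplit : ∫ z in closedBall (0 : E) r, f (x + z) • z
      = (∫ z in closedBall (0 : E) r, (f (x + z) - f x - (inner ℝ v z : ℝ)) • z)
        + ∫ z in closedBall (0 : E) r, (inner ℝ v z : ℝ) • z := by
    have hid : IntegrableOn (fun z : EuclideanSpace ℝ (Fin P) => f x • z)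
        (closedBall (0 : E) r) := integrableOn_cb (continuous_const.fun_smul continuous_id) r
    have heq : (fun z : EuclideanSpace ℝ (Fin P) => f (x + z) • z)
        = fun z => ((f (x + z) - f x - (inner ℝ v z : ℝ)) • z + (inner ℝ v z : ℝ) • z)
          + f x • z := by
      funext z
      rw [← add_smul, ← add_smul]
      congr 1
      ring
    have hzero : ∫ z in closedBall (0 : E) r, f x • z = 0 := by
      rw [integral_smul, int_ball_id, smul_zero]
    rw [heq, integral_add (integrableOn_cb (hhc.fun_add hGc) r) hid,
      integral_add hhint hGint, hzero, add_zero]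
  have hkey : c • (⨍ z in closedBall (0 : E) r, f (x + z) • z) - v
      = c • (V⁻¹ • ∫ z in closedBall (0 : E) r,
          (f (x + z) - f x - (inner ℝ v z : ℝ)) • z) := by
    have hv := avg_inner hP hr v
    rw [setAverage_eq, measureReal_def, ← hV, ← hc] at hv
    rw [setAverage_eq, measureReal_def, ← hV, hsplit, smul_add, smul_add, hv, add_sub_cancel_right]
  rw [hkey]
  have hnorm : ‖∫ z in closedBall (0 : E) r,
      (f (x + z) - f x - (inner ℝ v z : ℝ)) • z‖ ≤ (ε * r ^ 2) * V := by
    apply norm_setIntegral_le_of_norm_le_const (measure_closedBall_lt_top)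
    · intro z hz
      rw [mem_closedBall, dist_zero_right] at hz
      rw [norm_smul, Real.norm_eq_abs]
      calc |f (x + z) - f x - (inner ℝ v z : ℝ)| * ‖z‖
          ≤ (ε * ‖z‖) * ‖z‖ :=
            mul_le_mul_of_nonneg_right (hε z hz) (norm_nonneg _)
        _ ≤ (ε * r) * r := by
            apply mul_le_mul (mul_le_mul_of_nonneg_left hz hε0) hz (norm_nonneg _)
            positivity
        _ = ε * r ^ 2 := by ring
  calc ‖c • (V⁻¹ • ∫ z in closedBall (0 : E) r,
        (f (x + z) - f x - (inner ℝ v z : ℝ)) • z)‖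
      = c * (V⁻¹ * ‖∫ z in closedBall (0 : E) r,
          (f (x + z) - f x - (inner ℝ v z : ℝ)) • z‖) := by
        rw [norm_smul, norm_smul, Real.norm_eq_abs, Real.norm_eq_abs,
          abs_of_nonneg hcpos.le, abs_of_nonneg (inv_nonneg.mpr hVpos.le)]
    _ ≤ c * (V⁻¹ * ((ε * r ^ 2) * V)) := by
        apply mul_le_mul_of_nonneg_left _ hcpos.le
        exact mul_le_mul_of_nonneg_left hnorm (inv_nonneg.mpr hVpos.le)
    _ = c * (ε * r ^ 2) * (V⁻¹ * V) := by ring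
    _ = c * (ε * r ^ 2) := by rw [inv_mul_cancel₀ hVpos.ne', mul_one]
    _ = ((P : ℝ) + 2) * ε := by
        rw [hc]
        have h2 : (r:ℝ) ^ 2 ≠ 0 := by positivity
        field_simp

lemma grad_cont {f : EuclideanSpace ℝ (Fin P) → ℝ} (hf : ContDiff ℝ 1 f) :
    Continuous (gradient f) := by
  have h : Continuous (fderiv ℝ f) := hf.continuous_fderiv one_ne_zero
  have : gradient f = fun x =>
      (InnerProductSpace.toDual ℝ (EuclideanSpace ℝ (Fin P))).symm (fderiv ℝ f x) := rfl
  rw [this]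
  exact (InnerProductSpace.toDual ℝ (EuclideanSpace ℝ (Fin P))).symm.continuous.comp h

lemma lip_of_grad {f : EuclideanSpace ℝ (Fin P) → ℝ} (hf : ContDiff ℝ 1 f) {C : ℝ}
    (hgrad : ∀ x, ‖gradient f x‖ ≤ C) (a b : EuclideanSpace ℝ (Fin P)) :
    |f a - f b| ≤ C * ‖a - b‖ := by
  have hderiv : ∀ y ∈ (Set.univ : Set (EuclideanSpace ℝ (Fin P))),
      HasFDerivWithinAt f
        (InnerProductSpace.toDual ℝ (EuclideanSpace ℝ (Fin P)) (gradient f y)) Set.univ y := by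
    intro y _
    have := ((hf.differentiable one_ne_zero) y).hasGradientAt
    rw [hasGradientAt_iff_hasFDerivAt] at this
    exact this.hasFDerivWithinAt
  have hbound : ∀ y ∈ (Set.univ : Set (EuclideanSpace ℝ (Fin P))),
      ‖InnerProductSpace.toDual ℝ (EuclideanSpace ℝ (Fin P)) (gradient f y)‖ ≤ C := by
    intro y _
    rw [LinearIsometryEquiv.norm_map]
    exact hgrad y
  have := convex_univ.norm_image_sub_le_of_norm_hasFDerivWithin_le hderiv hbound
    (Set.mem_univ b) (Set.mem_univ a)
  simpa using this

lemma beta_cont {f : EuclideanSpace ℝ (Fin P) → ℝ} (hf : ContDiff ℝ 1 f) {C : ℝ}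
    (hgrad : ∀ x, ‖gradient f x‖ ≤ C) {r : ℝ} (hr : 0 < r) :
    Continuous (fun x : EuclideanSpace ℝ (Fin P) =>
      ∫ z in closedBall (0 : E) r, f (x + z) • z) := by
  have hC0 : 0 ≤ C := le_trans (norm_nonneg _) (hgrad 0)
  rw [continuous_iff_continuousAt]
  intro x₀
  apply continuousAt_of_dominated (bound := fun _ => (|f x₀| + C * (1 + r)) * r)
  · exact Filter.Eventually.of_forall fun x =>
      (((hf.continuous.comp (continuous_const.add continuous_id)).smul
        continuous_id)).aestronglyMeasurable.restrict
  · filter_upwards [Metric.ball_mem_nhds x₀ one_pos] with x hx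
    filter_upwards [ae_restrict_mem measurableSet_closedBall] with z hz
    rw [mem_closedBall, dist_zero_right] at hz
    rw [mem_ball, dist_eq_norm] at hx
    rw [norm_smul, Real.norm_eq_abs]
    have h1 : |f (x + z)| ≤ |f x₀| + C * (1 + r) := by
      have h2 : |f (x + z) - f x₀| ≤ C * ‖x + z - x₀‖ := lip_of_grad hf hgrad _ _
      have h3 : ‖x + z - x₀‖ ≤ 1 + r := by
        calc ‖x + z - x₀‖ = ‖(x - x₀) + z‖ := by congr 1; abel
          _ ≤ ‖x - x₀‖ + ‖z‖ := norm_add_le _ _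
          _ ≤ 1 + r := add_le_add hx.le hz
      have := abs_sub_abs_le_abs_sub (f (x + z)) (f x₀)
      nlinarith
    calc |f (x + z)| * ‖z‖ ≤ (|f x₀| + C * (1 + r)) * ‖z‖ :=
          mul_le_mul_of_nonneg_right h1 (norm_nonneg _)
      _ ≤ (|f x₀| + C * (1 + r)) * r := by
          apply mul_le_mul_of_nonneg_left hz
          have h4 : 0 ≤ C * (1 + r) := mul_nonneg hC0 (by linarith)
          have h5 : 0 ≤ |f x₀| := abs_nonneg _
          linarith
  · exact integrableOn_const measure_closedBall_lt_top.ne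
  · exact Filter.Eventually.of_forall fun z =>
      ((hf.continuous.comp (continuous_id.add continuous_const)).smul
        continuous_const).continuousAt

lemma coord_le_norm (w : EuclideanSpace ℝ (Fin P)) (i : Fin P) : |w i| ≤ ‖w‖ := by
  rw [EuclideanSpace.norm_eq]
  have h1 : |w i|^2 ≤ ∑ j, |w j|^2 :=
    Finset.single_le_sum (f := fun j => |w j|^2) (fun j _ => sq_nonneg _) (Finset.mem_univ i)
  calc |w i| = Real.sqrt (|w i|^2) := by rw [Real.sqrt_sq (abs_nonneg _)]
    _ ≤ Real.sqrt (∑ j, |w j|^2) := Real.sqrt_le_sqrt h1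

theorem stmt7 (P : ℕ) (hP : 1 ≤ P) (f : EuclideanSpace ℝ (Fin P) → ℝ)
    (hf : ContDiff ℝ 1 f) (C : ℝ) (hgrad : ∀ x, ‖gradient f x‖ ≤ C)
    (X : Set (EuclideanSpace ℝ (Fin P))) (hX : IsCompact X)
    (μ : Measure (EuclideanSpace ℝ (Fin P))) [IsProbabilityMeasure μ]
    (hsupp : μ Xᶜ = 0) :
    Filter.Tendsto
      (fun r : ℝ => Matrix.of fun i j : Fin P =>
        ∫ x,
          (((((P : ℝ) + 2) / r ^ 2) •
              ⨍ z in closedBall (0 : EuclideanSpace ℝ (Fin P)) r, f (x + z) • z) i) *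
          (((((P : ℝ) + 2) / r ^ 2) •
              ⨍ z in closedBall (0 : EuclideanSpace ℝ (Fin P)) r, f (x + z) • z) j) ∂μ)
      (nhdsWithin 0 (Set.Ioi 0))
      (nhds (Matrix.of fun i j : Fin P => ∫ x, gradient f x i * gradient f x j ∂μ)) := by
  have hC0 : 0 ≤ C := le_trans (norm_nonneg _) (hgrad 0)
  set K := Metric.cthickening 1 X with hK
  have hKc : IsCompact K := hX.cthickening
  have hgc : Continuous (gradient f) := grad_cont hf
  have hUC : UniformContinuousOn (gradient f) K :=
    hKc.uniformContinuousOn_of_continuous hgc.continuousOn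
  have hae : ∀ᵐ x ∂μ, x ∈ X := by
    rw [ae_iff]
    exact hsupp
  set B : ℝ → EuclideanSpace ℝ (Fin P) → EuclideanSpace ℝ (Fin P) :=
    fun r x => (((P : ℝ) + 2) / r ^ 2) •
      ⨍ z in closedBall (0 : EuclideanSpace ℝ (Fin P)) r, f (x + z) • z with hB
  apply tendsto_pi_nhds.2
  intro i
  apply tendsto_pi_nhds.2
  intro j
  rw [Metric.tendsto_nhdsWithin_nhds]
  intro ε hε
  set θ : ℝ := min 1 (ε / (2 * C + 2)) with hθdef
  have hθpos : 0 < θ := lt_min one_pos (div_pos hε (by linarith))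
  have hθ1 : θ ≤ 1 := min_le_left _ _
  have hθ2 : θ ≤ ε / (2 * C + 2) := min_le_right _ _
  set ε₀ : ℝ := θ / ((P : ℝ) + 2) with hε₀def
  have hε₀pos : 0 < ε₀ := div_pos hθpos (by positivity)
  obtain ⟨δ₀, hδ₀pos, hδ₀⟩ := Metric.uniformContinuousOn_iff.mp hUC ε₀ hε₀pos
  refine ⟨min δ₀ 1, lt_min hδ₀pos one_pos, ?_⟩
  intro r hr hrd
  rw [Set.mem_Ioi] at hr
  rw [Real.dist_eq, sub_zero, abs_of_pos hr] at hrd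
  have hrδ₀ : r < δ₀ := lt_of_lt_of_le hrd (min_le_left _ _)
  have hr1 : r ≤ 1 := le_of_lt (lt_of_lt_of_le hrd (min_le_right _ _))
  -- pointwise estimate on X
  have hcore : ∀ x ∈ X, ‖B r x - gradient f x‖ ≤ θ := by
    intro x hx
    have hxK : x ∈ K := Metric.self_subset_cthickening X hx
    have hbound := beta_sub_grad hP hr hf.continuous x (gradient f x) hε₀pos.le ?_
    · rw [hB]
      calc ‖(((P : ℝ) + 2) / r ^ 2) •
            (⨍ z in closedBall (0 : EuclideanSpace ℝ (Fin P)) r, f (x + z) • z)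
            - gradient f x‖ ≤ ((P : ℝ) + 2) * ε₀ := hbound
        _ = θ := by
            rw [hε₀def, mul_div_cancel₀ _ (by positivity : ((P : ℝ) + 2) ≠ 0)]
    · intro z hz
      apply taylor_bound hf
      intro t ht
      have htz : ‖t • z‖ ≤ r := by
        rw [norm_smul, Real.norm_eq_abs, abs_of_nonneg ht.1]
        calc t * ‖z‖ ≤ 1 * ‖z‖ := mul_le_mul_of_nonneg_right ht.2 (norm_nonneg _)
          _ = ‖z‖ := one_mul _
          _ ≤ r := hz
      have hmem : x + t • z ∈ K := by
        apply Metric.mem_cthickening_of_dist_le _ x 1 X hx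
        rw [dist_eq_norm, add_sub_cancel_left]
        exact le_trans htz hr1
      have hd : dist (x + t • z) x < δ₀ := by
        rw [dist_eq_norm, add_sub_cancel_left]
        exact lt_of_le_of_lt htz hrδ₀
      have := hδ₀ (x + t • z) hmem x hxK hd
      rw [dist_eq_norm] at this
      exact this.le
  -- coordinatewise bounds
  have hvc : ∀ (x : EuclideanSpace ℝ (Fin P)) (k : Fin P), |gradient f x k| ≤ C :=
    fun x k => le_trans (coord_le_norm _ k) (hgrad x)
  have hBc : ∀ x ∈ X, ∀ k : Fin P, |B r x k| ≤ C + 1 := by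
    intro x hx k
    have h1 : |B r x k - gradient f x k| ≤ θ := by
      have := coord_le_norm (B r x - gradient f x) k
      have h2 : (B r x - gradient f x) k = B r x k - gradient f x k := rfl
      rw [h2] at this
      exact le_trans this (hcore x hx)
    have := hvc x k
    have := abs_sub_abs_le_abs_sub (B r x k) (gradient f x k)
    have hθ1' : θ ≤ 1 := hθ1
    nlinarith [abs_nonneg (B r x k)]
  have hprod : ∀ x ∈ X,
      |B r x i * B r x j - gradient f x i * gradient f x j| ≤ (2 * C + 1) * θ := by
    intro x hx
    have hdi : |B r x i - gradient f x i| ≤ θ := by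
      have := coord_le_norm (B r x - gradient f x) i
      exact le_trans this (hcore x hx)
    have hdj : |B r x j - gradient f x j| ≤ θ := by
      have := coord_le_norm (B r x - gradient f x) j
      exact le_trans this (hcore x hx)
    have key : B r x i * B r x j - gradient f x i * gradient f x j
        = B r x i * (B r x j - gradient f x j)
          + (B r x i - gradient f x i) * gradient f x j := by ring
    rw [key]
    calc |B r x i * (B r x j - gradient f x j)
          + (B r x i - gradient f x i) * gradient f x j|
        ≤ |B r x i * (B r x j - gradient f x j)|
          + |(B r x i - gradient f x i) * gradient f x j| := abs_add_le _ _
      _ = |B r x i| * |B r x j - gradient f x j|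
          + |B r x i - gradient f x i| * |gradient f x j| := by rw [abs_mul, abs_mul]
      _ ≤ (C + 1) * θ + θ * C := by
          apply add_le_add
          · exact mul_le_mul (hBc x hx i) hdj (abs_nonneg _) (by linarith)
          · exact mul_le_mul hdi (hvc x j) (abs_nonneg _) hθpos.le
      _ = (2 * C + 1) * θ := by ring
  -- continuity and integrability
  have hBrc : Continuous (B r) := by
    have h1 := beta_cont hf hgrad hr
    have h2 : B r = fun x => (((P : ℝ) + 2) / r ^ 2) •
        ((volume (closedBall (0 : EuclideanSpace ℝ (Fin P)) r)).toReal⁻¹ •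
          ∫ z in closedBall (0 : EuclideanSpace ℝ (Fin P)) r, f (x + z) • z) := by
      funext x
      show (((P : ℝ) + 2) / r ^ 2) •
        (⨍ z in closedBall (0 : EuclideanSpace ℝ (Fin P)) r, f (x + z) • z) = _
      rw [setAverage_eq, measureReal_def]
    rw [h2]
    exact (continuous_const.fun_smul (continuous_const.fun_smul h1))
  have hIa : Integrable (fun x => B r x i * B r x j) μ := by
    apply Integrable.mono' (integrable_const ((C + 1) * (C + 1)))
    · exact (((cont_coord i).comp hBrc).mul ((cont_coord j).comp hBrc)).aestronglyMeasurable
    · filter_upwards [hae] with x hx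
      rw [Real.norm_eq_abs, abs_mul]
      exact mul_le_mul (hBc x hx i) (hBc x hx j) (abs_nonneg _) (by linarith)
  have hIb : Integrable (fun x => gradient f x i * gradient f x j) μ := by
    apply Integrable.mono' (integrable_const (C * C))
    · exact (((cont_coord i).comp hgc).mul ((cont_coord j).comp hgc)).aestronglyMeasurable
    · exact Filter.Eventually.of_forall fun x => by
        rw [Real.norm_eq_abs, abs_mul]
        exact mul_le_mul (hvc x i) (hvc x j) (abs_nonneg _) hC0
  -- conclude
  rw [Matrix.of_apply, Matrix.of_apply, Real.dist_eq]
  have hsub : (∫ x, B r x i * B r x j ∂μ) - ∫ x, gradient f x i * gradient f x j ∂μ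
      = ∫ x, (B r x i * B r x j - gradient f x i * gradient f x j) ∂μ :=
    (integral_sub hIa hIb).symm
  show |(∫ x, B r x i * B r x j ∂μ) - ∫ x, gradient f x i * gradient f x j ∂μ| < ε
  rw [hsub]
  have hnorm : ‖∫ x, (B r x i * B r x j - gradient f x i * gradient f x j) ∂μ‖
      ≤ (2 * C + 1) * θ := by
    have := norm_integral_le_of_norm_le_const (μ := μ)
      (f := fun x => B r x i * B r x j - gradient f x i * gradient f x j)
      (C := (2 * C + 1) * θ) ?_
    · simpa [measure_univ] using this
    · filter_upwards [hae] with x hx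
      rw [Real.norm_eq_abs]
      exact hprod x hx
  rw [← Real.norm_eq_abs]
  calc ‖∫ x, (B r x i * B r x j - gradient f x i * gradient f x j) ∂μ‖
      ≤ (2 * C + 1) * θ := hnorm
    _ ≤ (2 * C + 1) * (ε / (2 * C + 2)) :=
        mul_le_mul_of_nonneg_left hθ2 (by linarith)
    _ < ε := by
        rw [mul_div_assoc']
        rw [div_lt_iff₀ (by linarith : (0:ℝ) < 2 * C + 2)]
        nlinarith
end

section
/- Let f : R → R be given by f(x) = 1_{[x ≤ τ]} with τ ∈ (0,1), and let μ be the uniform measure on [0,1]. Then lim_{r→0} (5r/3) ∫_0^1 β_r(x)² dx = 1, where β_r(x) = (3/r²) E_{z~Unif([-r,r])}[z f(x+z)]. -/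
open MeasureTheory

open intervalIntegral in
private lemma stmt9_integrable_aux (t a b : ℝ) :
    IntervalIntegrable (fun z => z * (if z ≤ t then (1:ℝ) else 0)) volume a b := by
  apply IntervalIntegrable.mono_fun (g := fun z => z * (if z ≤ t then (1:ℝ) else 0))
    intervalIntegrable_id
  · exact (measurable_id.mul
      ((measurable_const.ite measurableSet_Iic measurable_const))).aestronglyMeasurable
  · filter_upwards with z
    by_cases h : z ≤ t <;> simp [h, abs_nonneg]

open intervalIntegral in
private lemma stmt9_inner_aux (r t : ℝ) (hr : 0 < r) :
    ∫ z in Set.Icc (-r) r, z * (if z ≤ t then (1:ℝ) else 0)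
      = ((max (-r) (min r t))^2 - r^2)/2 := by
  set c := max (-r) (min r t) with hc
  have h1 : -r ≤ c := le_max_left _ _
  have h2 : c ≤ r := max_le (by linarith) (min_le_left _ _)
  rw [MeasureTheory.integral_Icc_eq_integral_Ioc,
    ← intervalIntegral.integral_of_le (by linarith : -r ≤ r),
    ← intervalIntegral.integral_add_adjacent_intervals
      (a := -r) (b := c) (c := r) (stmt9_integrable_aux t _ _) (stmt9_integrable_aux t _ _)]
  have e1 : ∫ z in (-r)..c, z * (if z ≤ t then (1:ℝ) else 0) = ∫ z in (-r)..c, z := by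
    apply intervalIntegral.integral_congr_ae
    filter_upwards with z hz
    rw [Set.uIoc_of_le h1] at hz
    have : z ≤ t := by
      rcases le_or_gt z t with h | h
      · exact h
      · exfalso
        rcases le_max_iff.mp hz.2 with h' | h'
        · linarith [hz.1]
        · exact absurd (h'.trans (min_le_right _ _)) (not_le.mpr h)
    simp [this]
  have e2 : ∫ z in c..r, z * (if z ≤ t then (1:ℝ) else 0) = 0 := by
    rw [intervalIntegral.integral_congr_ae (g := fun _ => (0:ℝ))]
    · simp
    · filter_upwards with z hz
      rw [Set.uIoc_of_le h2] at hz
      have : ¬ z ≤ t := by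
        have : min r t < z := lt_of_le_of_lt (le_max_right _ _) hz.1
        rcases min_cases r t with ⟨h', h''⟩ | ⟨h', h''⟩
        · rw [h'] at this; linarith [hz.2]
        · rw [h'] at this; linarith
      simp [this]
  rw [e1, e2, integral_id]
  ring

private lemma stmt9_pointwise (r τ x : ℝ) (hr : 0 < r) :
    ((3 / r ^ 2) * ⨍ z in Set.Icc (-r) r, z * (if x + z ≤ τ then (1 : ℝ) else 0)) ^ 2
      = (9/(16*r^6)) * ((max (-r) (min r (τ - x)))^2 - r^2)^2 := by
  rw [setAverage_eq]
  have hvol : (volume (Set.Icc (-r) r)).toReal = 2*r := by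
    rw [Real.volume_Icc, ENNReal.toReal_ofReal (by linarith)]; ring
  have hite : ∀ z : ℝ, z * (if x + z ≤ τ then (1:ℝ) else 0)
      = z * (if z ≤ τ - x then 1 else 0) := by
    intro z
    congr 1
    exact if_congr (by constructor <;> intro <;> linarith) rfl rfl
  simp only [hite]
  rw [stmt9_inner_aux r (τ - x) hr, measureReal_def, hvol, smul_eq_mul]
  have : r ≠ 0 := ne_of_gt hr
  field_simp
  ring

open intervalIntegral in
private lemma stmt9_outer (r τ : ℝ) (hr : 0 < r) (h1 : r < τ) (h2 : r < 1 - τ) :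
    ∫ x in Set.Icc (0:ℝ) 1, (9/(16*r^6)) * ((max (-r) (min r (τ - x)))^2 - r^2)^2
      = 3/(5*r) := by
  set k : ℝ := 9/(16*r^6) with hk
  set g : ℝ → ℝ := fun x => k * ((max (-r) (min r (τ - x)))^2 - r^2)^2 with hg
  have hgc : Continuous g := by fun_prop
  have hint : ∀ a b : ℝ, IntervalIntegrable g volume a b := fun a b => hgc.intervalIntegrable a b
  rw [MeasureTheory.integral_Icc_eq_integral_Ioc,
    ← intervalIntegral.integral_of_le (by norm_num : (0:ℝ) ≤ 1),
    ← intervalIntegral.integral_add_adjacent_intervals (a := 0) (b := τ - r) (c := 1)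
      (hint _ _) (hint _ _),
    ← intervalIntegral.integral_add_adjacent_intervals (a := τ - r) (b := τ + r) (c := 1)
      (hint _ _) (hint _ _)]
  have e1 : ∫ x in (0:ℝ)..(τ - r), g x = 0 := by
    rw [intervalIntegral.integral_congr (g := fun _ => (0:ℝ))]
    · simp
    · intro x hx
      rw [Set.uIcc_of_le (by linarith)] at hx
      have hxr : r ≤ τ - x := by linarith [hx.2]
      simp only [hg, min_eq_left hxr, max_eq_right (by linarith : -r ≤ r)]
      ring
  have e3 : ∫ x in (τ + r)..1, g x = 0 := by
    rw [intervalIntegral.integral_congr (g := fun _ => (0:ℝ))]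
    · simp
    · intro x hx
      rw [Set.uIcc_of_le (by linarith)] at hx
      have hxr : τ - x ≤ -r := by linarith [hx.1]
      simp only [hg, min_eq_right (by linarith : τ - x ≤ r), max_eq_left hxr]
      ring
  have e2 : ∫ x in (τ - r)..(τ + r), g x = k * (16*r^5/15) := by
    rw [intervalIntegral.integral_congr
      (g := fun x => (fun u => k * ((u^2 - r^2)^2)) (x - τ))]
    · rw [intervalIntegral.integral_comp_sub_right (fun u => k * ((u^2 - r^2)^2)) τ,
        show τ - r - τ = -r by ring, show τ + r - τ = r by ring,
        intervalIntegral.integral_const_mul]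
      have expand : ∀ u : ℝ, (u^2 - r^2)^2 = u^4 - 2*r^2*u^2 + r^4 := by intro u; ring
      simp_rw [expand]
      rw [intervalIntegral.integral_add ((intervalIntegrable_pow 4).sub
            ((intervalIntegrable_pow 2).const_mul _)) (intervalIntegrable_const),
        intervalIntegral.integral_sub (intervalIntegrable_pow 4)
            ((intervalIntegrable_pow 2).const_mul _),
        intervalIntegral.integral_const_mul, integral_pow, integral_pow,
        intervalIntegral.integral_const, smul_eq_mul]
      ring
    · intro x hx
      rw [Set.uIcc_of_le (by linarith)] at hx
      have ha : -r ≤ τ - x := by linarith [hx.2]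
      have hb : τ - x ≤ r := by linarith [hx.1]
      simp only [hg, min_eq_right hb, max_eq_right ha]
      ring_nf
  rw [e1, e2, e3, hk]
  have : r ≠ 0 := ne_of_gt hr
  field_simp
  ring

theorem stmt9 (τ : ℝ) (hτ : τ ∈ Set.Ioo (0 : ℝ) 1) :
    Filter.Tendsto
      (fun r : ℝ => (5 * r / 3) *
        ∫ x in Set.Icc (0 : ℝ) 1,
          ((3 / r ^ 2) *
            ⨍ z in Set.Icc (-r) r, z * (if x + z ≤ τ then (1 : ℝ) else 0)) ^ 2)
      (nhdsWithin 0 (Set.Ioi 0)) (nhds 1) := by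
  obtain ⟨hτ0, hτ1⟩ := hτ
  have hε : (0:ℝ) < min τ (1 - τ) := lt_min hτ0 (by linarith)
  have hev : ∀ᶠ r in nhdsWithin (0:ℝ) (Set.Ioi 0),
      (5 * r / 3) *
        (∫ x in Set.Icc (0 : ℝ) 1,
          ((3 / r ^ 2) *
            ⨍ z in Set.Icc (-r) r, z * (if x + z ≤ τ then (1 : ℝ) else 0)) ^ 2) = 1 := by
    filter_upwards [Ioo_mem_nhdsGT_of_mem (Set.left_mem_Ico.mpr hε)] with r hr
    obtain ⟨hr0, hrε⟩ := hr
    have hr1 : r < τ := lt_of_lt_of_le hrε (min_le_left _ _)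
    have hr2 : r < 1 - τ := lt_of_lt_of_le hrε (min_le_right _ _)
    have : ∫ x in Set.Icc (0 : ℝ) 1,
        ((3 / r ^ 2) *
          ⨍ z in Set.Icc (-r) r, z * (if x + z ≤ τ then (1 : ℝ) else 0)) ^ 2 = 3/(5*r) := by
      rw [MeasureTheory.setIntegral_congr_fun measurableSet_Icc
        (fun x _ => stmt9_pointwise r τ x hr0)]
      exact stmt9_outer r τ hr0 hr1 hr2
    rw [this]
    field_simp
  exact Filter.Tendsto.congr' (Filter.EventuallyEq.symm hev) tendsto_const_nhds
end

section
/- Let f(x) = Σ_{j=1}^J c_j 1_{[x ≤ τ_j]} with distinct jump points τ_j ∈ R, and let μ have a continuous density δ on R. Then lim_{r→0} (5r/3) ∫ β_r(x)² δ(x) dx = Σ_{j=1}^J c_j² δ(τ_j), where β_r(x) = (3/r²) E_{z~Unif([-r,r])}[z f(x+z)]. -/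
open MeasureTheory Set Filter

noncomputable def phiP (t r x : ℝ) : ℝ :=
  if |x - t| ≤ r then (15/(16*r^5)) * ((x - t)^2 - r^2)^2 else 0

lemma phiP_nonneg (t : ℝ) {r : ℝ} (hr : 0 < r) (x : ℝ) : 0 ≤ phiP t r x := by
  unfold phiP; split
  · positivity
  · exact le_refl _

lemma phiP_zero {t r x : ℝ} (h : r < |x - t|) : phiP t r x = 0 := by
  unfold phiP; rw [if_neg (not_le.2 h)]

lemma phiP_meas (t r : ℝ) : Measurable (phiP t r) := by
  unfold phiP
  exact Measurable.ite (measurableSet_le (by fun_prop) measurable_const) (by fun_prop) measurable_const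

lemma integral_sq_sq (r : ℝ) :
    ∫ z in (-r)..r, (z^2 - r^2)^2 = 16*r^5/15 := by
  rw [intervalIntegral.integral_congr (g := fun z => z^4 - 2*r^2*z^2 + r^4)
      (fun x _ => by ring)]
  rw [intervalIntegral.integral_add
        (((intervalIntegral.intervalIntegrable_pow 4).sub
          ((intervalIntegral.intervalIntegrable_pow 2).const_mul _)))
        intervalIntegrable_const,
      intervalIntegral.integral_sub (intervalIntegral.intervalIntegrable_pow 4)
        ((intervalIntegral.intervalIntegrable_pow 2).const_mul _),
      integral_pow, intervalIntegral.integral_const_mul, integral_pow,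
      intervalIntegral.integral_const, smul_eq_mul]
  ring

lemma integral_phiP (t : ℝ) {r : ℝ} (hr0 : 0 < r) (hr1 : r < 1) :
    ∫ x in Set.Icc (t-1) (t+1), phiP t r x = 1 := by
  rw [setIntegral_eq_of_subset_of_forall_diff_eq_zero measurableSet_Icc
      (s := Set.Icc (t-r) (t+r)) (by intro x hx; constructor <;> [linarith [hx.1]; linarith [hx.2]])
      (by
        intro x hx
        apply phiP_zero
        rcases hx with ⟨_, hx2⟩
        simp only [Set.mem_Icc, not_and_or, not_le] at hx2
        rw [lt_abs]
        rcases hx2 with h | h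
        · right; linarith
        · left; linarith)]
  rw [setIntegral_congr_fun measurableSet_Icc
      (g := fun x => (15/(16*r^5)) * ((x - t)^2 - r^2)^2)
      (by
        intro x hx
        unfold phiP
        rw [if_pos]
        rw [abs_le]; exact ⟨by linarith [hx.1], by linarith [hx.2]⟩)]
  rw [integral_Icc_eq_integral_Ioc, ← intervalIntegral.integral_of_le (by linarith),
      intervalIntegral.integral_const_mul]
  have := intervalIntegral.integral_comp_sub_right (a := t - r) (b := t + r)
      (fun z => (z^2 - r^2)^2) t
  simp only [show t - r - t = -r by ring, show t + r - t = r by ring] at this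
  rw [this, integral_sq_sq]
  field_simp

lemma phiP_integrable_mul (t r : ℝ) {δ : ℝ → ℝ} (hδc : Continuous δ) :
    Integrable (fun x => phiP t r x * δ x) := by
  have : (fun x => phiP t r x * δ x) =
      (Set.Icc (t - r) (t + r)).indicator
        (fun x => (15/(16*r^5)) * ((x - t)^2 - r^2)^2 * δ x) := by
    funext x
    rw [Set.indicator_apply]
    unfold phiP
    by_cases h : |x - t| ≤ r
    · rw [if_pos h, if_pos (by rw [abs_le] at h; exact ⟨by linarith [h.1], by linarith [h.2]⟩)]
    · rw [if_neg h, if_neg (by rw [abs_le] at h; intro hx; exact h ⟨by linarith [hx.1], by linarith [hx.2]⟩), zero_mul]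
  rw [this]
  exact (((Continuous.mul (by fun_prop) hδc).integrableOn_Icc)).integrable_indicator measurableSet_Icc

lemma tendsto_phiP (t : ℝ) {δ : ℝ → ℝ} (hδc : Continuous δ) (hδi : Integrable δ) :
    Tendsto (fun r => ∫ x, phiP t r x * δ x) (nhdsWithin 0 (Set.Ioi 0)) (nhds (δ t)) := by
  have h := tendsto_integral_peak_smul_of_integrable_of_tendsto
    (μ := volume) (l := nhdsWithin (0:ℝ) (Set.Ioi 0)) (φ := fun r => phiP t r)
    (x₀ := t) (g := δ) (a := δ t)
    (measurableSet_Icc (a := t - 1) (b := t + 1))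
    (Icc_mem_nhds (by linarith) (by linarith))
    (by rw [Real.volume_Icc]; exact ENNReal.ofReal_ne_top)
    (by
      filter_upwards [self_mem_nhdsWithin] with r hr
      exact phiP_nonneg t hr)
    (by
      intro u hu hmem
      rcases Metric.isOpen_iff.1 hu t hmem with ⟨ε, hε, hball⟩
      rw [Metric.tendstoUniformlyOn_iff]
      intro η hη
      filter_upwards [Ioo_mem_nhdsGT_of_mem ⟨le_refl 0, hε⟩] with r hr x hx
      rw [phiP_zero (by
        by_contra hc
        exact hx (hball (by rw [Metric.mem_ball, Real.dist_eq]; push_neg at hc; linarith [hr.2])))]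
      simpa using hη)
    (by
      apply Tendsto.congr' (f₁ := fun _ => (1:ℝ))
      · filter_upwards [Ioo_mem_nhdsGT_of_mem ⟨le_refl 0, one_pos⟩] with r hr
        exact (integral_phiP t hr.1 hr.2).symm
      · exact tendsto_const_nhds)
    (by
      filter_upwards with r
      exact (phiP_meas t r).aestronglyMeasurable)
    hδi
    (hδc.continuousAt)
  simpa [smul_eq_mul] using h

lemma avg_int {r : ℝ} (hr : 0 < r) (x t : ℝ) :
    ∫ z in Set.Icc (-r) r, z * (if x + z ≤ t then (1:ℝ) else 0) =
      ((max (-r) (min r (t - x)))^2 - r^2)/2 := by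
  have h1 : (fun z : ℝ => z * (if x + z ≤ t then (1:ℝ) else 0)) =
      (Set.Iic (t - x)).indicator (fun z => z) := by
    funext z
    rw [Set.indicator_apply]
    by_cases h : x + z ≤ t
    · rw [if_pos h, if_pos (by simpa [Set.mem_Iic] using by linarith), mul_one]
    · rw [if_neg h, if_neg (by simp [Set.mem_Iic]; linarith), mul_zero]
  rw [h1, setIntegral_indicator measurableSet_Iic, show Set.Icc (-r) r ∩ Set.Iic (t-x) = Set.Icc (-r) (min r (t-x)) by rw [← Set.Ici_inter_Iic, Set.inter_assoc, Set.Iic_inter_Iic, Set.Ici_inter_Iic]]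
  by_cases h : -r ≤ min r (t - x)
  · rw [max_eq_right h, integral_Icc_eq_integral_Ioc, ← intervalIntegral.integral_of_le h,
      integral_id]
    ring
  · push_neg at h
    rw [Set.Icc_eq_empty (not_le.2 h), max_eq_left h.le]
    simp

lemma sep_lemma {J : ℕ} (τ : Fin J → ℝ) (hτ : Function.Injective τ) :
    ∃ ε : ℝ, 0 < ε ∧ ∀ j k : Fin J, j ≠ k → 2*ε ≤ |τ j - τ k| := by
  classical
  set s : Finset ℝ := Finset.univ.offDiag.image (fun p : Fin J × Fin J => |τ p.1 - τ p.2| / 2)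
    with hs
  rcases s.eq_empty_or_nonempty with h | h
  · refine ⟨1, one_pos, fun j k hjk => ?_⟩
    have hmem : ((j, k) : Fin J × Fin J) ∈ Finset.univ.offDiag :=
      Finset.mem_offDiag.2 ⟨Finset.mem_univ _, Finset.mem_univ _, hjk⟩
    have hm : |τ j - τ k| / 2 ∈ s :=
      Finset.mem_image_of_mem (fun p : Fin J × Fin J => |τ p.1 - τ p.2| / 2) hmem
    rw [h] at hm
    exact absurd hm (Finset.notMem_empty _)
  · refine ⟨s.min' h, ?_, ?_⟩
    · obtain ⟨p, hp, hval⟩ := Finset.mem_image.1 (s.min'_mem h)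
      have h1 : p.1 ≠ p.2 := (Finset.mem_offDiag.1 hp).2.2
      have h2 : τ p.1 ≠ τ p.2 := fun e => h1 (hτ e)
      have := abs_pos.2 (sub_ne_zero.2 h2)
      linarith
    · intro j k hjk
      have hmem : ((j, k) : Fin J × Fin J) ∈ Finset.univ.offDiag :=
        Finset.mem_offDiag.2 ⟨Finset.mem_univ _, Finset.mem_univ _, hjk⟩
      have hm : |τ j - τ k|/2 ∈ s :=
        Finset.mem_image_of_mem (fun p : Fin J × Fin J => |τ p.1 - τ p.2| / 2) hmem
      have := s.min'_le _ hm
      linarith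

lemma ind_eq (x t : ℝ) : (fun z : ℝ => z * (if x + z ≤ t then (1:ℝ) else 0)) =
    (Set.Iic (t - x)).indicator (fun z => z) := by
  funext z
  rw [Set.indicator_apply]
  by_cases h : x + z ≤ t
  · rw [if_pos h, if_pos (by simp [Set.mem_Iic]; linarith), mul_one]
  · rw [if_neg h, if_neg (by simp [Set.mem_Iic]; linarith), mul_zero]

theorem stmt10 (J : ℕ) (c : Fin J → ℝ) (τ : Fin J → ℝ) (hτ : Function.Injective τ)
    (δ : ℝ → ℝ) (hδc : Continuous δ) (hδ0 : ∀ x, 0 ≤ δ x) (hδ1 : ∫ x, δ x = 1) :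
    Filter.Tendsto
      (fun r : ℝ => (5 * r / 3) *
        ∫ x : ℝ,
          ((3 / r ^ 2) *
            ⨍ z in Set.Icc (-r) r,
              z * (∑ j, c j * (if x + z ≤ τ j then (1 : ℝ) else 0))) ^ 2 * δ x)
      (nhdsWithin 0 (Set.Ioi 0)) (nhds (∑ j, (c j) ^ 2 * δ (τ j))) := by
  have hδi : Integrable δ := by
    by_contra h
    rw [integral_undef h] at hδ1
    exact one_ne_zero hδ1.symm
  obtain ⟨ε, hε0, hεs⟩ := sep_lemma τ hτ
  refine Filter.Tendsto.congr' ?_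
    (tendsto_finset_sum _ fun j _ => ((tendsto_phiP (τ j) hδc hδi).const_mul _))
  filter_upwards [Ioo_mem_nhdsGT_of_mem ⟨le_refl (0:ℝ), hε0⟩] with r hr
  obtain ⟨hr0, hrε⟩ := hr
  have hrne : r ≠ 0 := ne_of_gt hr0
  -- closed form for the inner average
  have hq : ∀ x : ℝ, (3 / r ^ 2) *
      ⨍ z in Set.Icc (-r) r, z * (∑ j, c j * (if x + z ≤ τ j then (1 : ℝ) else 0)) =
      (3/(4*r^3)) * ∑ j, c j * ((max (-r) (min r (τ j - x)))^2 - r^2) := by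
    intro x
    rw [setAverage_eq, Real.volume_real_Icc_of_le (by linarith), show r - -r = 2*r by ring]
    have hint : ∀ j ∈ Finset.univ, IntegrableOn
        (fun z => c j * (z * (if x + z ≤ τ j then (1:ℝ) else 0))) (Set.Icc (-r) r) := by
      intro j _
      have h2 : (fun z : ℝ => c j * (z * (if x + z ≤ τ j then (1:ℝ) else 0))) =
          fun z => c j * ((Set.Iic (τ j - x)).indicator (fun z => z) z) := by
        funext z
        rw [congrFun (ind_eq x (τ j)) z]
      rw [h2]
      exact (((continuous_id (X := ℝ)).integrableOn_Icc (μ := volume) (a := -r) (b := r)).indicator (measurableSet_Iic (a := τ j - x))).const_mul (c j)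
    have hsum : (fun z : ℝ => z * (∑ j, c j * (if x + z ≤ τ j then (1:ℝ) else 0))) =
        fun z => ∑ j, c j * (z * (if x + z ≤ τ j then (1:ℝ) else 0)) := by
      funext z
      rw [Finset.mul_sum]
      exact Finset.sum_congr rfl fun j _ => by ring
    rw [hsum, integral_finset_sum _ hint]
    simp_rw [integral_const_mul, avg_int hr0 x]
    rw [smul_eq_mul, Finset.mul_sum, Finset.mul_sum, Finset.mul_sum]
    refine Finset.sum_congr rfl fun j _ => ?_
    field_simp
    ring_nf
    try exact Or.inl trivial
  have key : ∀ x : ℝ, (5 * r / 3) * (((3 / r ^ 2) *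
      ⨍ z in Set.Icc (-r) r, z * (∑ j, c j * (if x + z ≤ τ j then (1 : ℝ) else 0))) ^ 2 * δ x) =
      ∑ j, (c j)^2 * (phiP (τ j) r x * δ x) := by
    intro x
    rw [hq x]
    set a : Fin J → ℝ := fun j => (max (-r) (min r (τ j - x)))^2 - r^2 with ha
    have haz : ∀ j, r ≤ |x - τ j| → a j = 0 := by
      intro j hj
      rcases le_abs.1 hj with h | h
      · show (max (-r) (min r (τ j - x)))^2 - r^2 = 0
        rw [min_eq_right (by linarith), max_eq_left (by linarith)]
        ring
      · show (max (-r) (min r (τ j - x)))^2 - r^2 = 0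
        rw [min_eq_left (by linarith), max_eq_right (by linarith)]
        ring
    have hprod : ∀ j k, j ≠ k → a j * a k = 0 := by
      intro j k hjk
      by_cases hj : a j = 0; · rw [hj, zero_mul]
      by_cases hk : a k = 0; · rw [hk, mul_zero]
      exfalso
      have h1 : |x - τ j| < r := lt_of_not_ge fun h => hj (haz j h)
      have h2 : |x - τ k| < r := lt_of_not_ge fun h => hk (haz k h)
      have h3 := hεs j k hjk
      have h4 : |τ j - τ k| ≤ |τ j - x| + |x - τ k| := abs_sub_le (τ j) x (τ k)
      have h5 : |τ j - x| = |x - τ j| := abs_sub_comm (τ j) x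
      linarith
    have hsq : (∑ j, c j * a j)^2 = ∑ j, (c j * a j)^2 := by
      rw [sq, Finset.sum_mul_sum]
      refine Finset.sum_congr rfl fun j _ => ?_
      rw [Finset.sum_eq_single j
        (fun k _ hkj => by
          rw [show (c j * a j) * (c k * a k) = c j * c k * (a j * a k) by ring,
            hprod j k (Ne.symm hkj), mul_zero])
        (fun h => absurd (Finset.mem_univ j) h), sq]
    have hphi : ∀ j, (15/(16*r^5)) * (a j)^2 = phiP (τ j) r x := by
      intro j
      by_cases h : |x - τ j| ≤ r
      · have hxa : a j = (x - τ j)^2 - r^2 := by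
          show (max (-r) (min r (τ j - x)))^2 - r^2 = _
          rw [abs_le] at h
          rw [min_eq_right (by linarith [h.1]), max_eq_right (by linarith [h.2])]
          ring
        rw [hxa]
        unfold phiP
        rw [if_pos h]
      · have hxa : a j = 0 := haz j (le_of_lt (not_le.1 h))
        rw [hxa, phiP_zero (not_le.1 h)]
        ring
    rw [mul_pow, hsq, Finset.mul_sum, Finset.sum_mul, Finset.mul_sum]
    refine Finset.sum_congr rfl fun j _ => ?_
    rw [← hphi j]
    field_simp
    ring
  calc ∑ j, (c j)^2 * ∫ x, phiP (τ j) r x * δ x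
      = ∑ j, ∫ x, (c j)^2 * (phiP (τ j) r x * δ x) := by
        exact Finset.sum_congr rfl fun j _ => (integral_const_mul _ _).symm
    _ = ∫ x, ∑ j, (c j)^2 * (phiP (τ j) r x * δ x) :=
        (integral_finset_sum _ fun j _ => ((phiP_integrable_mul (τ j) r hδc).const_mul _)).symm
    _ = ∫ x, (5 * r / 3) * (((3 / r ^ 2) *
          ⨍ z in Set.Icc (-r) r, z * (∑ j, c j * (if x + z ≤ τ j then (1 : ℝ) else 0))) ^ 2 * δ x) :=
        integral_congr_ae (Filter.Eventually.of_forall fun x => (key x).symm)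
    _ = (5 * r / 3) * ∫ x, ((3 / r ^ 2) *
          ⨍ z in Set.Icc (-r) r, z * (∑ j, c j * (if x + z ≤ τ j then (1 : ℝ) else 0))) ^ 2 * δ x := by
        rw [integral_const_mul]
end

section
/- For z uniformly distributed on the ball B_r^P in R^P, E[z₁ 1_{[z₁ ≥ 0]}] = c_P r for an explicit positive constant c_P depending only on P; in particular the local regression coefficient β_r of the indicator 1_{[x₁ ≥ 0]} evaluated at the origin has first component ((P+2)/r²)·c_P r = (P+2) c_P / r, which diverges as r → 0. -/
open MeasureTheory Metric

lemma if_eq_max (a : ℝ) : (if (0:ℝ) ≤ a then a else 0) = max a 0 := by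
  split_ifs with h <;> [exact (max_eq_left h).symm; exact (max_eq_right (le_of_not_ge h)).symm]

lemma coord_abs_le (P : ℕ) (i : Fin P) (x : EuclideanSpace ℝ (Fin P)) : |x i| ≤ ‖x‖ := by
  rw [EuclideanSpace.norm_eq, ← Real.sqrt_sq_eq_abs]
  apply Real.sqrt_le_sqrt
  have := Finset.single_le_sum (f := fun j => ‖x j‖^2) (fun j _ => sq_nonneg _) (Finset.mem_univ i)
  simpa [Real.norm_eq_abs, sq_abs] using this

-- scalar integral scaling
lemma scal_scale (P : ℕ) (i : Fin P) {r : ℝ} (hr : 0 < r) :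
    ∫ z in closedBall (0 : EuclideanSpace ℝ (Fin P)) r, max (z i) 0 =
      r ^ (P + 1) * ∫ z in closedBall (0 : EuclideanSpace ℝ (Fin P)) 1, max (z i) 0 := by
  have h := Measure.setIntegral_comp_smul_of_pos (μ := volume)
      (fun z : EuclideanSpace ℝ (Fin P) => max (z i) 0) (closedBall 0 1) hr
  rw [_root_.smul_closedBall _ _ zero_le_one] at h
  simp only [smul_zero, Real.norm_eq_abs, abs_of_pos hr, mul_one, PiLp.smul_apply,
    smul_eq_mul, finrank_euclideanSpace_fin] at h
  have h2 : ∀ x : EuclideanSpace ℝ (Fin P), max (r * x i) 0 = r * max (x i) 0 := by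
    intro x; rw [mul_max_of_nonneg _ _ hr.le, mul_zero]
  simp only [h2] at h
  rw [integral_const_mul] at h
  have hrP : (r : ℝ) ^ P ≠ 0 := pow_ne_zero _ hr.ne'
  rw [eq_comm, inv_mul_eq_iff_eq_mul₀ hrP] at h
  rw [h, pow_succ]
  ring

-- average scaling
lemma avg_scale (P : ℕ) (i : Fin P) {r : ℝ} (hr : 0 < r)
    (hint : ∫ z in closedBall (0 : EuclideanSpace ℝ (Fin P)) r, max (z i) 0 =
      r ^ (P + 1) * ∫ z in closedBall (0 : EuclideanSpace ℝ (Fin P)) 1, max (z i) 0) :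
    (⨍ z in closedBall (0 : EuclideanSpace ℝ (Fin P)) r, max (z i) 0) =
      (⨍ z in closedBall (0 : EuclideanSpace ℝ (Fin P)) 1, max (z i) 0) * r := by
  have hm : volume (closedBall (0 : EuclideanSpace ℝ (Fin P)) r) =
      ENNReal.ofReal (r ^ P) * volume (closedBall (0 : EuclideanSpace ℝ (Fin P)) 1) := by
    simpa [finrank_euclideanSpace_fin] using
      Measure.addHaar_closedBall' (volume) (0 : EuclideanSpace ℝ (Fin P)) hr.le
  have hV : 0 < (volume (closedBall (0 : EuclideanSpace ℝ (Fin P)) 1)).toReal :=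
    ENNReal.toReal_pos (measure_closedBall_pos volume _ one_pos).ne' measure_closedBall_lt_top.ne
  rw [setAverage_eq, setAverage_eq, hint, measureReal_def, measureReal_def, hm, ENNReal.toReal_mul,
    ENNReal.toReal_ofReal (pow_nonneg hr.le _)]
  have hrP : (r : ℝ) ^ P ≠ 0 := pow_ne_zero _ hr.ne'
  rw [smul_eq_mul, smul_eq_mul, pow_succ, mul_inv]
  field_simp

-- positivity of the unit-ball integral
lemma int_pos (P : ℕ) (hP : 1 ≤ P) (i : Fin P) :
    0 < ∫ z in closedBall (0 : EuclideanSpace ℝ (Fin P)) 1, max (z i) 0 := by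
  have hcont : Continuous fun z : EuclideanSpace ℝ (Fin P) => max (z i) 0 :=
    ((EuclideanSpace.proj i).continuous).max continuous_const
  have hint : IntegrableOn (fun z : EuclideanSpace ℝ (Fin P) => max (z i) 0)
      (closedBall 0 1) volume :=
    hcont.continuousOn.integrableOn_compact (isCompact_closedBall _ _)
  refine (setIntegral_pos_iff_support_of_nonneg_ae
    (Filter.Eventually.of_forall fun z => le_max_right _ _) hint).mpr ?_
  set c : EuclideanSpace ℝ (Fin P) := (1/2 : ℝ) • EuclideanSpace.single i (1:ℝ) with hc
  have hci : c i = 1/2 := by simp [hc]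
  have hcn : ‖c‖ = 1/2 := by
    rw [hc, norm_smul, EuclideanSpace.norm_single]; norm_num
  have hsub : ball c (1/4) ⊆
      (Function.support fun z : EuclideanSpace ℝ (Fin P) => max (z i) 0) ∩ closedBall 0 1 := by
    intro x hx
    rw [mem_ball, dist_eq_norm] at hx
    have h1 : |x i - c i| ≤ ‖x - c‖ := by
      simpa using coord_abs_le P i (x - c)
    have h2 : (1/4 : ℝ) < x i := by
      have := abs_sub_lt_iff.mp (lt_of_le_of_lt h1 hx)
      rw [hci] at this; linarith [this.2]
    constructor
    · simp only [Function.mem_support]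
      have : max (x i) 0 = x i := max_eq_left (by linarith)
      rw [this]; linarith
    · rw [mem_closedBall, dist_zero_right]
      calc ‖x‖ ≤ ‖x - c‖ + ‖c‖ := by simpa using norm_add_le (x - c) c
        _ ≤ 1/4 + 1/2 := by rw [hcn]; linarith
        _ ≤ 1 := by norm_num
  calc (0:ENNReal) < volume (ball c (1/4)) := measure_ball_pos volume c (by norm_num)
    _ ≤ _ := measure_mono hsub
lemma vec_coord (P : ℕ) (i : Fin P) {r : ℝ} (hr : 0 < r) :
    (∫ z in closedBall (0 : EuclideanSpace ℝ (Fin P)) r,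
        (if (0 : ℝ) ≤ z i then (1 : ℝ) else 0) • z) i =
      ∫ z in closedBall (0 : EuclideanSpace ℝ (Fin P)) r, max (z i) 0 := by
  set F : EuclideanSpace ℝ (Fin P) → EuclideanSpace ℝ (Fin P) :=
    fun z => (if (0 : ℝ) ≤ z i then (1 : ℝ) else 0) • z with hF
  have hmbl : Measurable F := by
    have h1 : Measurable fun z : EuclideanSpace ℝ (Fin P) =>
        (if (0 : ℝ) ≤ z i then (1 : ℝ) else 0) :=
      Measurable.ite (measurableSet_le measurable_const
        (EuclideanSpace.proj i).continuous.measurable) measurable_const measurable_const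
    exact h1.smul measurable_id
  have hint : IntegrableOn F (closedBall 0 r) volume := by
    apply Measure.integrableOn_of_bounded (M := r) measure_closedBall_lt_top.ne
      hmbl.aestronglyMeasurable
    filter_upwards [ae_restrict_mem measurableSet_closedBall] with z hz
    rw [mem_closedBall, dist_zero_right] at hz
    have : ‖F z‖ ≤ ‖z‖ := by
      rw [hF]; simp only; rw [norm_smul]
      split_ifs <;> simp
    linarith
  have hcomm := (EuclideanSpace.proj i).integral_comp_comm hint
  have h2 : ∀ z : EuclideanSpace ℝ (Fin P), EuclideanSpace.proj i (F z) = max (z i) 0 := by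
    intro z
    show F z i = max (z i) 0
    rw [hF]
    simp only [PiLp.smul_apply, smul_eq_mul]
    split_ifs with h
    · rw [one_mul, max_eq_left h]
    · rw [zero_mul, max_eq_right (le_of_not_ge h)]
  simp only [h2] at hcomm
  exact hcomm.symm

theorem stmt14 (P : ℕ) (hP : 1 ≤ P) (i : Fin P) :
    ∃ cP : ℝ, 0 < cP ∧
      cP = ⨍ z in closedBall (0 : EuclideanSpace ℝ (Fin P)) 1,
          (if (0 : ℝ) ≤ z i then z i else 0) ∧
      (∀ r : ℝ, 0 < r →
        (⨍ z in closedBall (0 : EuclideanSpace ℝ (Fin P)) r,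
            (if (0 : ℝ) ≤ z i then z i else 0)) = cP * r ∧
        ((((P : ℝ) + 2) / r ^ 2) •
            ⨍ z in closedBall (0 : EuclideanSpace ℝ (Fin P)) r,
              (if (0 : ℝ) ≤ z i then (1 : ℝ) else 0) • z) i =
          ((P : ℝ) + 2) * cP / r) ∧
      Filter.Tendsto (fun r : ℝ => ((P : ℝ) + 2) * cP / r)
        (nhdsWithin 0 (Set.Ioi 0)) Filter.atTop := by
  set cP : ℝ := ⨍ z in closedBall (0 : EuclideanSpace ℝ (Fin P)) 1, max (z i) 0 with hcP
  have hV : 0 < (volume (closedBall (0 : EuclideanSpace ℝ (Fin P)) 1)).toReal :=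
    ENNReal.toReal_pos (measure_closedBall_pos volume _ one_pos).ne' measure_closedBall_lt_top.ne
  have hcPpos : 0 < cP := by
    rw [hcP, setAverage_eq, smul_eq_mul]
    exact mul_pos (inv_pos.mpr hV) (int_pos P hP i)
  refine ⟨cP, hcPpos, ?_, ?_, ?_⟩
  · simp only [if_eq_max]; exact hcP
  · intro r hr
    have havg : (⨍ z in closedBall (0 : EuclideanSpace ℝ (Fin P)) r, max (z i) 0) = cP * r :=
      avg_scale P i hr (scal_scale P i hr)
    constructor
    · simp only [if_eq_max]; exact havg
    · have hv := vec_coord P i hr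
      rw [setAverage_eq, smul_eq_mul] at havg
      have hco : ((⨍ z in closedBall (0 : EuclideanSpace ℝ (Fin P)) r,
          (if (0 : ℝ) ≤ z i then (1 : ℝ) else 0) • z) i) = cP * r := by
        rw [setAverage_eq, PiLp.smul_apply, smul_eq_mul, hv, havg]
      rw [PiLp.smul_apply, smul_eq_mul, hco]
      field_simp
  · have h := Filter.Tendsto.const_mul_atTop
      (r := ((P : ℝ) + 2) * cP) (by positivity) tendsto_inv_nhdsGT_zero
    simpa [div_eq_mul_inv] using h
end

section
/- Let f = g + h where g is Lipschitz and h is bounded, and suppose lim_{r→0} r · E_{x~μ}[β_r^{(h)}(x) β_r^{(h)}(x)ᵀ] = M for the discontinuous part h. Then lim_{r→0} r · E_{x~μ}[β_r^{(f)}(x) β_r^{(f)}(x)ᵀ] = M as well, provided additionally that r^{1/2} β_r^{(h)} is dominated by a μ-square-integrable function uniformly in r. That is, the extended active subspace of f ignores the smooth component g. -/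
open MeasureTheory Metric

noncomputable def betaCoef (P : ℕ) (φ : EuclideanSpace ℝ (Fin P) → ℝ) (r : ℝ)
    (x : EuclideanSpace ℝ (Fin P)) : EuclideanSpace ℝ (Fin P) :=
  (((P : ℝ) + 2) / r ^ 2) •
    ⨍ z in closedBall (0 : EuclideanSpace ℝ (Fin P)) r, φ (x + z) • z

lemma integral_id_closedBall (P : ℕ) (r : ℝ) :
    ∫ z in closedBall (0 : EuclideanSpace ℝ (Fin P)) r, z = 0 := by
  have h1 : ∫ z in closedBall (0 : EuclideanSpace ℝ (Fin P)) r, z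
      = ∫ z in closedBall (0 : EuclideanSpace ℝ (Fin P)) r, -z := by
    rw [← integral_indicator (measurableSet_closedBall),
      ← integral_indicator (measurableSet_closedBall),
      ← integral_neg_eq_self
        (Set.indicator (closedBall (0 : EuclideanSpace ℝ (Fin P)) r) (fun z => z)) volume]
    congr 1
    ext x
    by_cases hx : x ∈ closedBall (0 : EuclideanSpace ℝ (Fin P)) r
    · have hx' : -x ∈ closedBall (0 : EuclideanSpace ℝ (Fin P)) r := by
        simpa [mem_closedBall, dist_eq_norm] using hx
      simp [Set.indicator_of_mem hx, Set.indicator_of_mem hx']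
    · have hx' : -x ∉ closedBall (0 : EuclideanSpace ℝ (Fin P)) r := by
        simpa [mem_closedBall, dist_eq_norm] using hx
      simp [Set.indicator_of_notMem hx, Set.indicator_of_notMem hx']
  rw [integral_neg] at h1
  have h2 : (∫ z in closedBall (0 : EuclideanSpace ℝ (Fin P)) r, z)
      + (∫ z in closedBall (0 : EuclideanSpace ℝ (Fin P)) r, z) = 0 := by
    nth_rewrite 2 [h1]; exact add_neg_cancel _
  have h3 : (2 : ℝ) • (∫ z in closedBall (0 : EuclideanSpace ℝ (Fin P)) r, z) = 0 := by
    rw [two_smul]; exact h2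
  simpa using (smul_eq_zero.mp h3).resolve_left (by norm_num)

lemma betaCoef_add_of_integrable (P : ℕ) (g h : EuclideanSpace ℝ (Fin P) → ℝ) (r : ℝ)
    (x : EuclideanSpace ℝ (Fin P))
    (hgI : IntegrableOn (fun z => g (x + z) • z) (closedBall (0 : EuclideanSpace ℝ (Fin P)) r))
    (hhI : IntegrableOn (fun z => h (x + z) • z) (closedBall (0 : EuclideanSpace ℝ (Fin P)) r)) :
    betaCoef P (g + h) r x = betaCoef P g r x + betaCoef P h r x := by
  unfold betaCoef
  rw [← smul_add]
  congr 1
  rw [setAverage_eq, setAverage_eq, setAverage_eq, ← smul_add, ← integral_add hgI hhI]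
  congr 1
  apply integral_congr_ae
  filter_upwards with z
  simp [add_smul]

lemma abs_coord_le_norm (P : ℕ) (v : EuclideanSpace ℝ (Fin P)) (i : Fin P) : |v i| ≤ ‖v‖ := by
  rw [EuclideanSpace.norm_eq]
  have : |v i| = Real.sqrt (|v i| ^ 2) := by
    rw [Real.sqrt_sq (abs_nonneg _)]
  rw [this]
  apply Real.sqrt_le_sqrt
  exact Finset.single_le_sum (f := fun j => |v j| ^ 2) (fun j _ => sq_nonneg _) (Finset.mem_univ i)

lemma betaCoef_lipschitz_bound (P : ℕ) (L : NNReal) (g : EuclideanSpace ℝ (Fin P) → ℝ)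
    (hg : LipschitzWith L g) {r : ℝ} (hr : 0 < r) (x : EuclideanSpace ℝ (Fin P)) :
    ‖betaCoef P g r x‖ ≤ ((P : ℝ) + 2) * L := by
  set B := closedBall (0 : EuclideanSpace ℝ (Fin P)) r with hB
  have hvol_pos : 0 < (volume B).toReal := by
    refine ENNReal.toReal_pos ?_ measure_closedBall_lt_top.ne
    exact (lt_of_lt_of_le (measure_ball_pos volume 0 hr) (measure_mono ball_subset_closedBall)).ne'
  have key : ∫ z in B, g (x + z) • z = ∫ z in B, (g (x + z) - g x) • z := by
    have hI1 : IntegrableOn (fun z => g (x + z) • z) B := by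
      apply ContinuousOn.integrableOn_compact (isCompact_closedBall _ _)
      exact ((hg.continuous.comp (continuous_const.add continuous_id)).smul continuous_id).continuousOn
    have hI2 : IntegrableOn (fun z : EuclideanSpace ℝ (Fin P) => g x • z) B := by
      apply ContinuousOn.integrableOn_compact (isCompact_closedBall _ _)
      exact (by fun_prop : Continuous (fun z : EuclideanSpace ℝ (Fin P) => g x • z)).continuousOn
    have : ∫ z in B, (g (x + z) - g x) • z
        = (∫ z in B, g (x + z) • z) - ∫ z in B, g x • z := by
      rw [← integral_sub hI1 hI2]
      apply integral_congr_ae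
      filter_upwards with z
      simp [sub_smul]
    rw [this, integral_smul, integral_id_closedBall, smul_zero, sub_zero]
  have hnorm : ‖∫ z in B, (g (x + z) - g x) • z‖ ≤ (L * r * r) * (volume B).toReal := by
    apply norm_setIntegral_le_of_norm_le_const measure_closedBall_lt_top
    intro z hz
    have hz' : ‖z‖ ≤ r := by simpa [mem_closedBall, dist_eq_norm] using hz
    rw [norm_smul]
    have h1 : ‖g (x + z) - g x‖ ≤ L * r := by
      calc ‖g (x + z) - g x‖ = dist (g (x + z)) (g x) := by rw [dist_eq_norm]
        _ ≤ L * dist (x + z) x := hg.dist_le_mul _ _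
        _ ≤ L * r := by
            refine mul_le_mul_of_nonneg_left ?_ (NNReal.coe_nonneg L)
            simpa [dist_eq_norm] using hz'
    calc ‖g (x + z) - g x‖ * ‖z‖ ≤ (L * r) * r := by
          apply mul_le_mul h1 hz' (norm_nonneg _)
          positivity
      _ = L * r * r := by ring
  unfold betaCoef
  rw [norm_smul, setAverage_eq, key, norm_smul, ← hB, Real.norm_eq_abs, Real.norm_eq_abs,
    abs_of_nonneg (show (0:ℝ) ≤ ((P : ℝ) + 2) / r ^ 2 by positivity),
    abs_of_nonneg (show (0:ℝ) ≤ (volume.real B)⁻¹ by positivity)]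
  calc ((P : ℝ) + 2) / r ^ 2 * ((volume B).toReal⁻¹ * ‖∫ z in B, (g (x + z) - g x) • z‖)
      ≤ ((P : ℝ) + 2) / r ^ 2 * ((volume B).toReal⁻¹ * ((L * r * r) * (volume B).toReal)) := by
        gcongr
    _ = ((P : ℝ) + 2) * L := by
        field_simp

lemma betaCoef_measurable (P : ℕ) {φ : EuclideanSpace ℝ (Fin P) → ℝ} (hφ : Measurable φ)
    (r : ℝ) : Measurable (betaCoef P φ r) := by
  unfold betaCoef
  refine (measurable_const : Measurable fun _ : EuclideanSpace ℝ (Fin P) => ((P : ℝ) + 2) / r ^ 2).smul ?_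
  have : (fun x => ⨍ z in closedBall (0 : EuclideanSpace ℝ (Fin P)) r, φ (x + z) • z)
      = fun x => (volume (closedBall (0 : EuclideanSpace ℝ (Fin P)) r)).toReal⁻¹ •
        ∫ z in closedBall (0 : EuclideanSpace ℝ (Fin P)) r, φ (x + z) • z := by
    funext x; rw [setAverage_eq]; rfl
  rw [this]
  refine (measurable_const : Measurable fun _ : EuclideanSpace ℝ (Fin P) => (volume (closedBall (0 : EuclideanSpace ℝ (Fin P)) r)).toReal⁻¹).smul ?_
  have key : ∀ x : EuclideanSpace ℝ (Fin P),
      ∫ z in closedBall (0 : EuclideanSpace ℝ (Fin P)) r, φ (x + z) • z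
      = ∫ z, (closedBall (0 : EuclideanSpace ℝ (Fin P)) r).indicator
          (fun z => φ (x + z) • z) z := by
    intro x; rw [integral_indicator measurableSet_closedBall]
  simp only [key]
  have hsm : StronglyMeasurable (fun p : EuclideanSpace ℝ (Fin P) × EuclideanSpace ℝ (Fin P) =>
      (closedBall (0 : EuclideanSpace ℝ (Fin P)) r).indicator (fun z => φ (p.1 + z) • z) p.2) := by
    apply Measurable.stronglyMeasurable
    have h1 : Measurable (fun p : EuclideanSpace ℝ (Fin P) × EuclideanSpace ℝ (Fin P) =>
        φ (p.1 + p.2) • p.2) :=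
      (hφ.comp (measurable_fst.add measurable_snd)).smul measurable_snd
    have : (fun p : EuclideanSpace ℝ (Fin P) × EuclideanSpace ℝ (Fin P) =>
        (closedBall (0 : EuclideanSpace ℝ (Fin P)) r).indicator (fun z => φ (p.1 + z) • z) p.2)
        = Set.indicator (Set.univ ×ˢ closedBall (0 : EuclideanSpace ℝ (Fin P)) r)
          (fun p => φ (p.1 + p.2) • p.2) := by
      funext p
      by_cases hp : p.2 ∈ closedBall (0 : EuclideanSpace ℝ (Fin P)) r
      · rw [Set.indicator_of_mem hp, Set.indicator_of_mem (by simp [hp])]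
      · rw [Set.indicator_of_notMem hp, Set.indicator_of_notMem (by simp [hp])]
    rw [this]
    exact h1.indicator (MeasurableSet.univ.prod measurableSet_closedBall)
  exact (hsm.integral_prod_right').measurable

theorem stmt17 (P : ℕ) (hP : 1 ≤ P) (L : NNReal)
    (g h : EuclideanSpace ℝ (Fin P) → ℝ)
    (hg : LipschitzWith L g) (hmeas : Measurable h) (hb : ∃ C : ℝ, ∀ y, |h y| ≤ C)
    (μ : Measure (EuclideanSpace ℝ (Fin P))) [IsProbabilityMeasure μ]
    (M : Matrix (Fin P) (Fin P) ℝ)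
    (hM : Filter.Tendsto
      (fun r : ℝ => Matrix.of fun i j : Fin P =>
        r * ∫ x, betaCoef P h r x i * betaCoef P h r x j ∂μ)
      (nhdsWithin 0 (Set.Ioi 0)) (nhds M))
    (G : EuclideanSpace ℝ (Fin P) → ℝ)
    (hGint : Integrable (fun x => G x ^ 2) μ)
    (hdom : ∀ r : ℝ, 0 < r → ∀ x, ‖Real.sqrt r • betaCoef P h r x‖ ≤ G x) :
    Filter.Tendsto
      (fun r : ℝ => Matrix.of fun i j : Fin P =>
        r * ∫ x, betaCoef P (g + h) r x i * betaCoef P (g + h) r x j ∂μ)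
      (nhdsWithin 0 (Set.Ioi 0)) (nhds M) := by
  obtain ⟨C, hC⟩ := hb
  set K : ℝ := ((P : ℝ) + 2) * L with hK
  have hK0 : 0 ≤ K := by positivity
  -- G is nonnegative
  have hG0 : ∀ x, 0 ≤ G x := fun x => le_trans (norm_nonneg _) (hdom 1 one_pos x)
  -- G is integrable
  have hGsm : AEStronglyMeasurable G μ := by
    have : AEStronglyMeasurable (fun x => Real.sqrt (G x ^ 2)) μ :=
      Real.continuous_sqrt.comp_aestronglyMeasurable hGint.1
    refine this.congr ?_
    filter_upwards with x
    rw [Real.sqrt_sq (hG0 x)]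
  have hGI : Integrable G μ := by
    refine Integrable.mono' ((integrable_const (1 : ℝ)).add hGint) hGsm ?_
    filter_upwards with x
    simp only [Pi.add_apply]
    rw [Real.norm_eq_abs, abs_of_nonneg (hG0 x)]
    rcases le_or_gt (G x) 1 with h1 | h1
    · nlinarith [sq_nonneg (G x)]
    · nlinarith
  set CG : ℝ := ∫ x, G x ∂μ with hCG
  have hCG0 : 0 ≤ CG := integral_nonneg hG0
  have hgm : Measurable g := hg.continuous.measurable
  -- entrywise convergence
  refine tendsto_pi_nhds.mpr ?_
  intro i
  rw [tendsto_pi_nhds]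
  intro j
  have hMij : Filter.Tendsto
      (fun r : ℝ => r * ∫ x, betaCoef P h r x i * betaCoef P h r x j ∂μ)
      (nhdsWithin 0 (Set.Ioi 0)) (nhds (M i j)) := by
    have h1 := (tendsto_pi_nhds.mp ((tendsto_pi_nhds.mp hM) i)) j
    simpa using h1
  -- the error term
  set err : ℝ → ℝ := fun r =>
    (r * ∫ x, betaCoef P (g + h) r x i * betaCoef P (g + h) r x j ∂μ)
      - r * ∫ x, betaCoef P h r x i * betaCoef P h r x j ∂μ with herr
  have herrbound : ∀ r : ℝ, 0 < r → |err r| ≤ K ^ 2 * r + 2 * K * CG * Real.sqrt r := by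
    intro r hr
    set a := betaCoef P g r with ha
    set b := betaCoef P h r with hbdef
    have hsr : 0 < Real.sqrt r := Real.sqrt_pos.mpr hr
    have ham : Measurable a := betaCoef_measurable P hgm r
    have hbm : Measurable b := betaCoef_measurable P hmeas r
    have haK : ∀ x, ‖a x‖ ≤ K := fun x => betaCoef_lipschitz_bound P L g hg hr x
    have hbG : ∀ x, ‖b x‖ ≤ G x / Real.sqrt r := by
      intro x
      have := hdom r hr x
      rw [norm_smul, Real.norm_eq_abs, abs_of_nonneg (Real.sqrt_nonneg r)] at this
      rw [le_div_iff₀ hsr]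
      linarith [this]
    -- coordinate bounds
    have haKc : ∀ x (k : Fin P), |a x k| ≤ K := fun x k =>
      le_trans (abs_coord_le_norm P (a x) k) (haK x)
    have hbGc : ∀ x (k : Fin P), |b x k| ≤ G x / Real.sqrt r := fun x k =>
      le_trans (abs_coord_le_norm P (b x) k) (hbG x)
    -- linearity
    have hab : ∀ x, betaCoef P (g + h) r x = a x + b x := by
      intro x
      apply betaCoef_add_of_integrable
      · apply ContinuousOn.integrableOn_compact (isCompact_closedBall _ _)
        exact ((hg.continuous.comp (continuous_const.add continuous_id)).smul
          continuous_id).continuousOn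
      · have hsm : AEStronglyMeasurable (fun z => h (x + z) • z)
            (volume.restrict (closedBall (0 : EuclideanSpace ℝ (Fin P)) r)) :=
          ((hmeas.comp (measurable_const.add measurable_id)).smul measurable_id).aestronglyMeasurable
        refine Integrable.mono'
          (g := fun _ => C * |r|)
          (integrableOn_const measure_closedBall_lt_top.ne) hsm ?_
        filter_upwards [ae_restrict_mem measurableSet_closedBall] with z hz
        have hz' : ‖z‖ ≤ r := by simpa [mem_closedBall, dist_eq_norm] using hz
        rw [norm_smul, Real.norm_eq_abs]
        have hC0 : 0 ≤ C := le_trans (abs_nonneg _) (hC 0)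
        calc |h (x + z)| * ‖z‖ ≤ C * r := by
              apply mul_le_mul (hC _) hz' (norm_nonneg _) hC0
          _ ≤ C * |r| := by gcongr; exact le_abs_self r
    -- measurability of coordinates
    have hmc : ∀ (v : EuclideanSpace ℝ (Fin P) → EuclideanSpace ℝ (Fin P)), Measurable v →
        ∀ k : Fin P, Measurable (fun x => v x k) := by
      intro v hv k
      exact (measurable_pi_apply k).comp ((WithLp.measurable_ofLp 2 _).comp hv)
    -- integrability facts
    have Ibb : Integrable (fun x => b x i * b x j) μ := by
      refine Integrable.mono' (hGint.div_const r) (((hmc b hbm i).mul (hmc b hbm j)).aestronglyMeasurable) ?_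
      filter_upwards with x
      rw [Real.norm_eq_abs, abs_mul]
      calc |b x i| * |b x j| ≤ (G x / Real.sqrt r) * (G x / Real.sqrt r) := by
            apply mul_le_mul (hbGc x i) (hbGc x j) (abs_nonneg _)
            exact div_nonneg (hG0 x) hsr.le
        _ = G x ^ 2 / r := by
            rw [div_mul_div_comm, Real.mul_self_sqrt hr.le, sq]
    have Iaa : Integrable (fun x => a x i * a x j) μ := by
      refine Integrable.mono' (integrable_const (K * K)) (((hmc a ham i).mul (hmc a ham j)).aestronglyMeasurable) ?_
      filter_upwards with x
      rw [Real.norm_eq_abs, abs_mul]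
      exact mul_le_mul (haKc x i) (haKc x j) (abs_nonneg _) hK0
    have Iab : Integrable (fun x => a x i * b x j) μ := by
      refine Integrable.mono' ((hGI.const_mul (K / Real.sqrt r))) (((hmc a ham i).mul (hmc b hbm j)).aestronglyMeasurable) ?_
      filter_upwards with x
      rw [Real.norm_eq_abs, abs_mul]
      calc |a x i| * |b x j| ≤ K * (G x / Real.sqrt r) := by
            apply mul_le_mul (haKc x i) (hbGc x j) (abs_nonneg _) hK0
        _ = K / Real.sqrt r * G x := by ring
    have Iba : Integrable (fun x => b x i * a x j) μ := by
      refine Integrable.mono' ((hGI.const_mul (K / Real.sqrt r))) (((hmc b hbm i).mul (hmc a ham j)).aestronglyMeasurable) ?_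
      filter_upwards with x
      rw [Real.norm_eq_abs, abs_mul]
      calc |b x i| * |a x j| ≤ (G x / Real.sqrt r) * K := by
            apply mul_le_mul (hbGc x i) (haKc x j) (abs_nonneg _)
            exact div_nonneg (hG0 x) hsr.le
        _ = K / Real.sqrt r * G x := by ring
    -- decompose integral
    have hff : (fun x => betaCoef P (g + h) r x i * betaCoef P (g + h) r x j)
        = fun x => b x i * b x j + (a x i * a x j + a x i * b x j + b x i * a x j) := by
      funext x
      rw [hab x]
      simp only [PiLp.add_apply]
      ring
    set D : EuclideanSpace ℝ (Fin P) → ℝ :=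
      fun x => a x i * a x j + a x i * b x j + b x i * a x j with hD
    have ID : Integrable D μ := (Iaa.add Iab).add Iba
    have hsplit : ∫ x, betaCoef P (g + h) r x i * betaCoef P (g + h) r x j ∂μ
        = (∫ x, b x i * b x j ∂μ) + ∫ x, D x ∂μ := by
      rw [hff, integral_add Ibb ID]
    have herr_eq : err r = r * ∫ x, D x ∂μ := by
      rw [herr]
      simp only
      rw [hsplit]
      ring
    have hDb : |∫ x, D x ∂μ| ≤ K ^ 2 + 2 * K / Real.sqrt r * CG := by
      have h1 : |∫ x, D x ∂μ| ≤ ∫ x, |D x| ∂μ := by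
        simpa [Real.norm_eq_abs] using norm_integral_le_integral_norm (μ := μ) D
      have h2 : ∫ x, |D x| ∂μ ≤ ∫ x, K ^ 2 + 2 * K / Real.sqrt r * G x ∂μ := by
        apply integral_mono ID.abs ((integrable_const _).add (hGI.const_mul _))
        intro x
        calc |D x| ≤ |a x i * a x j| + |a x i * b x j| + |b x i * a x j| :=
              (abs_add_le _ _).trans (by gcongr; exact abs_add_le _ _)
          _ ≤ K * K + K * (G x / Real.sqrt r) + (G x / Real.sqrt r) * K := by
              gcongr
              · rw [abs_mul]
                exact mul_le_mul (haKc x i) (haKc x j) (abs_nonneg _) hK0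
              · rw [abs_mul]
                exact mul_le_mul (haKc x i) (hbGc x j) (abs_nonneg _) hK0
              · rw [abs_mul]
                refine mul_le_mul (hbGc x i) (haKc x j) (abs_nonneg _) ?_
                exact div_nonneg (hG0 x) hsr.le
          _ = K ^ 2 + 2 * K / Real.sqrt r * G x := by
              field_simp
              ring
      have h3 : ∫ x, K ^ 2 + 2 * K / Real.sqrt r * G x ∂μ
          = K ^ 2 + 2 * K / Real.sqrt r * CG := by
        rw [integral_add (integrable_const _) (hGI.const_mul _), integral_const,
          integral_const_mul]
        simp [hCG]
      linarith [h1.trans (h2.trans_eq h3)]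
    rw [herr_eq, abs_mul, abs_of_nonneg hr.le]
    calc r * |∫ x, D x ∂μ| ≤ r * (K ^ 2 + 2 * K / Real.sqrt r * CG) := by gcongr
      _ = K ^ 2 * r + 2 * K * CG * (r / Real.sqrt r) := by ring
      _ = K ^ 2 * r + 2 * K * CG * Real.sqrt r := by rw [Real.div_sqrt]
  -- the error tends to 0
  have hbndT : Filter.Tendsto (fun r : ℝ => K ^ 2 * r + 2 * K * CG * Real.sqrt r)
      (nhdsWithin 0 (Set.Ioi 0)) (nhds 0) := by
    have hc : Continuous (fun r : ℝ => K ^ 2 * r + 2 * K * CG * Real.sqrt r) :=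
      (continuous_const.mul continuous_id).add (continuous_const.mul Real.continuous_sqrt)
    have := hc.tendsto 0
    simp only [Real.sqrt_zero, mul_zero, add_zero] at this
    exact this.mono_left nhdsWithin_le_nhds
  have herr0 : Filter.Tendsto err (nhdsWithin 0 (Set.Ioi 0)) (nhds 0) := by
    apply squeeze_zero_norm' _ hbndT
    filter_upwards [self_mem_nhdsWithin] with r hr
    rw [Real.norm_eq_abs]
    exact herrbound r hr
  simp only [Matrix.of_apply]
  have hfinal := hMij.add herr0
  rw [add_zero] at hfinal
  refine hfinal.congr ?_
  intro r
  rw [herr]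
  ring
end

section
/- Let h : R^P → R be C¹ with ∇h(x) ≠ 0 whenever h(x) = 0, and let f = 1_{[h ≤ 0]}. For a point x with h(x) = 0, the direction of β_r(x) converges to the direction of ∇h(x) as r → 0: that is, β_r(x)/‖β_r(x)‖ → −∇h(x)/‖∇h(x)‖. -/
open MeasureTheory Metric

open scoped RealInnerProductSpace Pointwise

section Aux

variable {P : ℕ}

local notation "E" => EuclideanSpace ℝ (Fin P)



lemma aux_pointwise (h : E → ℝ) (x : E) (hx : h x = 0)
    (hd : DifferentiableAt ℝ h x) (w : E) (hw : ⟪gradient h x, w⟫ ≠ 0) :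
    Filter.Tendsto (fun r : ℝ => if h (x + r • w) ≤ 0 then (1 : ℝ) else 0)
      (nhdsWithin 0 (Set.Ioi 0))
      (nhds (if ⟪gradient h x, w⟫ ≤ 0 then (1 : ℝ) else 0)) := by
  have hF : HasFDerivAt h (InnerProductSpace.toDual ℝ _ (gradient h x)) (x + (0:ℝ) • w) := by
    rw [zero_smul, add_zero]; exact hd.hasGradientAt.hasFDerivAt
  have hc : HasDerivAt (fun r : ℝ => x + r • w) w 0 := by
    simpa using ((hasDerivAt_id (0 : ℝ)).smul_const w).const_add x
  have hD : HasDerivAt (fun r : ℝ => h (x + r • w)) ⟪gradient h x, w⟫ 0 := by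
    simpa [InnerProductSpace.toDual_apply_apply, Function.comp_def] using hF.comp_hasDerivAt 0 hc
  rw [hasDerivAt_iff_tendsto_slope] at hD
  have hD' := hD.mono_left (nhdsWithin_mono _ (fun r hr => ne_of_gt hr))
  rcases lt_or_gt_of_ne hw with hneg | hpos
  · have hev : ∀ᶠ r in nhdsWithin (0:ℝ) (Set.Ioi 0), slope (fun r : ℝ => h (x + r • w)) 0 r < 0 :=
      hD'.eventually_lt_const hneg
    refine Filter.Tendsto.congr' ?_ tendsto_const_nhds
    filter_upwards [hev, self_mem_nhdsWithin] with r hs hr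
    have hr0 : (0:ℝ) < r := hr
    have hval : h (x + r • w) / r < 0 := by
      simpa [slope_def_field, hx] using hs
    have hneg2 : h (x + r • w) < 0 := by
      have := mul_neg_of_neg_of_pos hval hr0
      rwa [div_mul_cancel₀ _ hr0.ne'] at this
    rw [if_pos hneg.le, if_pos hneg2.le]
  · have hev : ∀ᶠ r in nhdsWithin (0:ℝ) (Set.Ioi 0), 0 < slope (fun r : ℝ => h (x + r • w)) 0 r :=
      hD'.eventually_const_lt hpos
    refine Filter.Tendsto.congr' ?_ tendsto_const_nhds
    filter_upwards [hev, self_mem_nhdsWithin] with r hs hr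
    have hr0 : (0:ℝ) < r := hr
    have hval : 0 < h (x + r • w) / r := by
      simpa [slope_def_field, hx] using hs
    have hpos2 : 0 < h (x + r • w) := by
      have := mul_pos hval hr0
      rwa [div_mul_cancel₀ _ hr0.ne'] at this
    rw [if_neg (not_le.mpr hpos2), if_neg (not_le.mpr hpos)]

lemma aux_hyperplane_null (g : E) (hg : g ≠ 0) :
    volume {w : E | ⟪g, w⟫ = 0} = 0 := by
  have hset : {w : E | ⟪g, w⟫ = 0} = ((ℝ ∙ g)ᗮ : Submodule ℝ E) := by
    ext w
    simp [Submodule.mem_orthogonal_singleton_iff_inner_right]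
  rw [hset]
  apply Measure.addHaar_submodule
  intro htop
  have : g ∈ (ℝ ∙ g)ᗮ := htop ▸ Submodule.mem_top
  exact hg (inner_self_eq_zero.mp (this g (Submodule.mem_span_singleton_self g)))

lemma aux_meas (g : E) : Measurable (fun w : E => (if ⟪g, w⟫ ≤ 0 then (1:ℝ) else 0)) := by
  have hset : MeasurableSet {w : E | ⟪g, w⟫ ≤ 0} :=
    measurableSet_le (continuous_const.inner continuous_id).measurable measurable_const
  exact Measurable.ite hset measurable_const measurable_const

lemma aux_integrable (g : E) :
    IntegrableOn (fun w : E => (if ⟪g, w⟫ ≤ 0 then (1:ℝ) else 0) • w)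
      (closedBall (0:E) 1) volume := by
  apply Measure.integrableOn_of_bounded (M := 1) measure_closedBall_lt_top.ne
    ((aux_meas g).smul measurable_id).aestronglyMeasurable
  refine (ae_restrict_iff' measurableSet_closedBall).mpr (ae_of_all _ fun w hw => ?_)
  simp only [Pi.smul_apply', id_eq]
  rw [norm_smul]
  have h1 : ‖w‖ ≤ 1 := by simpa using mem_closedBall_iff_norm.mp hw
  have h2 : ‖(if ⟪g, w⟫ ≤ 0 then (1:ℝ) else 0)‖ ≤ 1 := by split <;> simp
  calc ‖(if ⟪g, w⟫ ≤ 0 then (1:ℝ) else 0)‖ * ‖w‖ ≤ 1 * 1 :=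
        mul_le_mul h2 h1 (norm_nonneg _) zero_le_one
    _ = 1 := by ring

lemma aux_limit_vector (g : E) (hg : g ≠ 0) :
    ∃ t : ℝ, t < 0 ∧
      (∫ w in closedBall (0 : E) 1, (if ⟪g, w⟫ ≤ 0 then (1 : ℝ) else 0) • w) = t • g := by
  set v : E := ∫ w in closedBall (0 : E) 1, (if ⟪g, w⟫ ≤ 0 then (1 : ℝ) else 0) • w with hv
  -- Step 1 : v is orthogonal to every u orthogonal to g
  have step1 : ∀ u : E, ⟪g, u⟫ = 0 → ⟪u, v⟫ = 0 := by
    intro u hu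
    rcases eq_or_ne u 0 with rfl | hu0
    · simp
    set T : E ≃ₗᵢ[ℝ] E := Submodule.reflection ((ℝ ∙ u)ᗮ) with hT
    have hTg : T g = g :=
      Submodule.reflection_mem_subspace_eq_self
        (Submodule.mem_orthogonal_singleton_iff_inner_right.mpr
          (by rw [real_inner_comm]; exact hu))
    have hTu : T u = -u := Submodule.reflection_orthogonalComplement_singleton_eq_neg u
    have hTT : ∀ w : E, T (T w) = w := fun w => Submodule.reflection_reflection _ w
    have hadj : ∀ a w : E, ⟪a, T w⟫ = ⟪T a, w⟫ := by
      intro a w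
      conv_lhs => rw [← hTT a]
      rw [T.inner_map_map]
    have hinner : ⟪u, v⟫ = ∫ w in closedBall (0:E) 1,
        (if ⟪g, w⟫ ≤ 0 then (1:ℝ) else 0) * ⟪u, w⟫ := by
      rw [hv, ← integral_inner (aux_integrable g) u]
      simp_rw [real_inner_smul_right]
    have hMP : MeasurePreserving (T : E → E) volume volume := T.measurePreserving
    have hemb : MeasurableEmbedding (T : E → E) :=
      T.toHomeomorph.measurableEmbedding
    have hball : (T : E → E) ⁻¹' (closedBall (0:E) 1) = closedBall (0:E) 1 := by
      ext w
      simp [mem_closedBall_iff_norm, T.norm_map]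
    have hcov : (∫ w in closedBall (0:E) 1, (if ⟪g, w⟫ ≤ 0 then (1:ℝ) else 0) * ⟪u, w⟫)
        = ∫ w in closedBall (0:E) 1,
            (if ⟪g, T w⟫ ≤ 0 then (1:ℝ) else 0) * ⟪u, T w⟫ := by
      rw [← hMP.setIntegral_preimage_emb hemb
        (fun w => (if ⟪g, w⟫ ≤ 0 then (1:ℝ) else 0) * ⟪u, w⟫) (closedBall (0:E) 1), hball]
    have hptw : ∀ w : E, (if ⟪g, T w⟫ ≤ 0 then (1:ℝ) else 0) * ⟪u, T w⟫
        = -((if ⟪g, w⟫ ≤ 0 then (1:ℝ) else 0) * ⟪u, w⟫) := by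
      intro w
      have h1 : ⟪g, T w⟫ = ⟪g, w⟫ := by rw [hadj, hTg]
      have h2 : ⟪u, T w⟫ = -⟪u, w⟫ := by rw [hadj, hTu, inner_neg_left]
      rw [h1, h2]; ring
    have : ⟪u, v⟫ = -⟪u, v⟫ := by
      rw [hinner]
      nth_rewrite 1 [hcov]
      simp_rw [hptw]
      rw [integral_neg, ← hinner]
    linarith
  -- Step 2 : ⟪g, v⟫ < 0
  have step2 : ⟪g, v⟫ < 0 := by
    have hinner : ⟪g, v⟫ = ∫ w in closedBall (0:E) 1,
        (if ⟪g, w⟫ ≤ 0 then (1:ℝ) else 0) * ⟪g, w⟫ := by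
      rw [hv, ← integral_inner (aux_integrable g) g]
      simp_rw [real_inner_smul_right]
    set p : E → ℝ := fun w => (if ⟪g, w⟫ ≤ 0 then (1:ℝ) else 0) * ⟪g, w⟫ with hp
    have hpint : IntegrableOn p (closedBall (0:E) 1) volume := by
      apply Measure.integrableOn_of_bounded (M := ‖g‖) measure_closedBall_lt_top.ne
        ((aux_meas g).mul (continuous_const.inner continuous_id).measurable).aestronglyMeasurable
      refine (ae_restrict_iff' measurableSet_closedBall).mpr (ae_of_all _ fun w hw => ?_)
      have h1 : ‖w‖ ≤ 1 := by simpa using mem_closedBall_iff_norm.mp hw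
      have h2 : |⟪g, w⟫| ≤ ‖g‖ := by
        calc |⟪g, w⟫| ≤ ‖g‖ * ‖w‖ := abs_real_inner_le_norm g w
          _ ≤ ‖g‖ * 1 := by nlinarith [norm_nonneg (g : E)]
          _ = ‖g‖ := mul_one _
      simp only [hp, id_eq, Pi.mul_apply, Real.norm_eq_abs, abs_mul]
      split
      · simpa using h2
      · simpa using norm_nonneg (g : E)
    have hposmeas : 0 < volume ({w : E | ⟪g, w⟫ < 0} ∩ ball (0:E) 1) := by
      have hopen : IsOpen ({w : E | ⟪g, w⟫ < 0} ∩ ball (0:E) 1) :=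
        (isOpen_lt (continuous_const.inner continuous_id) continuous_const).inter isOpen_ball
      have hne : ((-(‖g‖⁻¹ * 2⁻¹)) • g) ∈ {w : E | ⟪g, w⟫ < 0} ∩ ball (0:E) 1 := by
        constructor
        · have : ⟪g, (-(‖g‖⁻¹ * 2⁻¹)) • g⟫ = -(‖g‖⁻¹ * 2⁻¹) * ‖g‖^2 := by
            rw [real_inner_smul_right, real_inner_self_eq_norm_sq]
          rw [Set.mem_setOf_eq, this]
          have hgpos : (0:ℝ) < ‖g‖ := norm_pos_iff.mpr hg
          have : 0 < ‖g‖⁻¹ * 2⁻¹ * ‖g‖^2 := by positivity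
          nlinarith
        · rw [mem_ball_iff_norm, sub_zero, norm_smul]
          have hgpos : (0:ℝ) < ‖g‖ := norm_pos_iff.mpr hg
          have heq : ‖g‖⁻¹ * 2⁻¹ * ‖g‖ = 2⁻¹ := by field_simp
          rw [Real.norm_eq_abs, abs_neg, abs_of_nonneg (by positivity), heq]
          norm_num
      exact hopen.measure_pos volume ⟨_, hne⟩
    have hneg : (0:ℝ) < ∫ w in closedBall (0:E) 1, -p w := by
      rw [setIntegral_pos_iff_support_of_nonneg_ae]
      · apply lt_of_lt_of_le hposmeas
        apply measure_mono
        rintro w ⟨hw1, hw2⟩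
        refine ⟨?_, ball_subset_closedBall hw2⟩
        have hlt : ⟪g, w⟫ < 0 := hw1
        have hpw : p w = ⟪g, w⟫ := by
          show (if ⟪g, w⟫ ≤ 0 then (1:ℝ) else 0) * ⟪g, w⟫ = ⟪g, w⟫
          rw [if_pos hlt.le, one_mul]
        simp only [Function.mem_support, neg_ne_zero, hpw]
        exact ne_of_lt hlt
      · refine (ae_restrict_iff' measurableSet_closedBall).mpr (ae_of_all _ fun w _ => ?_)
        rw [hp]
        simp only [Pi.zero_apply, neg_nonneg]
        split
        · next hle => exact mul_nonpos_of_nonneg_of_nonpos zero_le_one hle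
        · simp
      · exact hpint.neg
    rw [hinner]
    have heq2 : ∫ w in closedBall (0:E) 1, -p w = -∫ w in closedBall (0:E) 1, p w :=
      integral_neg _
    rw [heq2] at hneg
    linarith
  -- Step 3 : conclude
  have hvmem : v ∈ (ℝ ∙ g) := by
    rw [← Submodule.orthogonal_orthogonal (ℝ ∙ g), Submodule.mem_orthogonal]
    intro u hu
    rw [Submodule.mem_orthogonal_singleton_iff_inner_right] at hu
    exact step1 u hu
  rcases Submodule.mem_span_singleton.mp hvmem with ⟨t, ht⟩
  refine ⟨t, ?_, ht.symm⟩
  have : ⟪g, v⟫ = t * ‖g‖^2 := by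
    rw [← ht, real_inner_smul_right, real_inner_self_eq_norm_sq]
  rw [this] at step2
  have hgpos : (0:ℝ) < ‖g‖ := norm_pos_iff.mpr hg
  nlinarith


lemma aux_normalize {c : ℝ} (hc : 0 < c) (u : E) :
    ‖c • u‖⁻¹ • (c • u) = ‖u‖⁻¹ • u := by
  rw [norm_smul, Real.norm_eq_abs, abs_of_pos hc, smul_smul]
  congr 1
  rcases eq_or_ne ‖u‖ 0 with h | h
  · simp [h]
  · field_simp

lemma aux_rescale (h : E → ℝ) (x : E) {r : ℝ} (hr : 0 < r) :
    betaCoef P (fun y => if h y ≤ 0 then (1 : ℝ) else 0) r x =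
      (((P : ℝ) + 2) / r ^ 2 * ((volume (closedBall (0:E) r)).toReal⁻¹ * (r ^ P * r))) •
        ∫ w in closedBall (0:E) 1, (if h (x + r • w) ≤ 0 then (1 : ℝ) else 0) • w := by
  have hball : r • closedBall (0:E) 1 = closedBall (0:E) r := by
    rw [_root_.smul_closedBall _ _ zero_le_one, smul_zero, Real.norm_eq_abs, abs_of_pos hr, mul_one]
  have hcv := Measure.setIntegral_comp_smul_of_pos volume
    (fun z : E => (if h (x + z) ≤ 0 then (1 : ℝ) else 0) • z) (closedBall (0:E) 1) hr
  rw [hball, finrank_euclideanSpace_fin] at hcv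
  have hrP : (0:ℝ) < r ^ P := pow_pos hr P
  have e1 : ∫ w in closedBall (0:E) 1, (if h (x + r • w) ≤ 0 then (1 : ℝ) else 0) • (r • w)
      = r • ∫ w in closedBall (0:E) 1, (if h (x + r • w) ≤ 0 then (1 : ℝ) else 0) • w := by
    rw [← integral_smul]
    congr 1
    ext w
    rw [smul_comm]
  have hcv2 : ∫ z in closedBall (0:E) r, (if h (x + z) ≤ 0 then (1 : ℝ) else 0) • z
      = (r ^ P * r) • ∫ w in closedBall (0:E) 1,
          (if h (x + r • w) ≤ 0 then (1 : ℝ) else 0) • w := by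
    calc ∫ z in closedBall (0:E) r, (if h (x + z) ≤ 0 then (1 : ℝ) else 0) • z
        = (r ^ P) • ((r ^ P)⁻¹ • ∫ z in closedBall (0:E) r,
            (if h (x + z) ≤ 0 then (1 : ℝ) else 0) • z) := by
          rw [smul_smul, mul_inv_cancel₀ hrP.ne', one_smul]
      _ = (r ^ P) • ∫ w in closedBall (0:E) 1,
            (if h (x + r • w) ≤ 0 then (1 : ℝ) else 0) • (r • w) := by rw [hcv]
      _ = (r ^ P) • (r • ∫ w in closedBall (0:E) 1,
            (if h (x + r • w) ≤ 0 then (1 : ℝ) else 0) • w) := by rw [e1]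
      _ = _ := by rw [smul_smul]
  rw [betaCoef, setAverage_eq, hcv2, smul_smul, smul_smul, mul_assoc]
  rfl


end Aux

theorem stmt18 (P : ℕ) (hP : 1 ≤ P) (h : EuclideanSpace ℝ (Fin P) → ℝ)
    (hh : ContDiff ℝ 1 h) (hgrad : ∀ y, h y = 0 → gradient h y ≠ 0)
    (x : EuclideanSpace ℝ (Fin P)) (hx : h x = 0) :
    Filter.Tendsto
      (fun r : ℝ =>
        ‖betaCoef P (fun y => if h y ≤ 0 then (1 : ℝ) else 0) r x‖⁻¹ •
          betaCoef P (fun y => if h y ≤ 0 then (1 : ℝ) else 0) r x)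
      (nhdsWithin 0 (Set.Ioi 0))
      (nhds (-(‖gradient h x‖⁻¹ • gradient h x))) := by
  set g : EuclideanSpace ℝ (Fin P) := gradient h x with hgdef
  have hg : g ≠ 0 := hgrad x hx
  set I : ℝ → EuclideanSpace ℝ (Fin P) := fun r =>
    ∫ w in closedBall (0 : EuclideanSpace ℝ (Fin P)) 1,
      (if h (x + r • w) ≤ 0 then (1 : ℝ) else 0) • w with hI
  set v : EuclideanSpace ℝ (Fin P) :=
    ∫ w in closedBall (0 : EuclideanSpace ℝ (Fin P)) 1,
      (if ⟪g, w⟫ ≤ 0 then (1 : ℝ) else 0) • w with hvdef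
  -- dominated convergence
  have hIv : Filter.Tendsto I (nhdsWithin 0 (Set.Ioi 0)) (nhds v) := by
    apply tendsto_integral_filter_of_dominated_convergence (bound := fun _ => (1:ℝ))
    · refine Filter.Eventually.of_forall fun r => ?_
      have hmeas : Measurable fun w : EuclideanSpace ℝ (Fin P) =>
          (if h (x + r • w) ≤ 0 then (1:ℝ) else 0) := by
        have hcont : Continuous fun w : EuclideanSpace ℝ (Fin P) => h (x + r • w) :=
          hh.continuous.comp (continuous_const.add (continuous_id.const_smul r))
        exact Measurable.ite (measurableSet_le hcont.measurable measurable_const)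
          measurable_const measurable_const
      exact (hmeas.smul measurable_id).aestronglyMeasurable
    · refine Filter.Eventually.of_forall fun r => ?_
      refine (ae_restrict_iff' measurableSet_closedBall).mpr (ae_of_all _ fun w hw => ?_)
      rw [norm_smul]
      have h1 : ‖w‖ ≤ 1 := by simpa using mem_closedBall_iff_norm.mp hw
      have h2 : ‖(if h (x + r • w) ≤ 0 then (1:ℝ) else 0)‖ ≤ 1 := by split <;> simp
      calc ‖(if h (x + r • w) ≤ 0 then (1:ℝ) else 0)‖ * ‖w‖ ≤ 1 * 1 :=
            mul_le_mul h2 h1 (norm_nonneg _) zero_le_one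
        _ = 1 := by ring
    · exact integrableOn_const measure_closedBall_lt_top.ne
    · have hae : ∀ᵐ w : EuclideanSpace ℝ (Fin P) ∂volume, ⟪g, w⟫ ≠ 0 := by
        rw [ae_iff]
        simpa using aux_hyperplane_null g hg
      filter_upwards [ae_restrict_of_ae hae] with w hw
      exact (aux_pointwise h x hx (hh.differentiable one_ne_zero x) w hw).smul_const w
  -- limit vector
  obtain ⟨t, ht, htv⟩ := aux_limit_vector g hg
  have hvne : v ≠ 0 := by
    rw [hvdef, htv]
    exact smul_ne_zero (ne_of_lt ht) hg
  have hvnorm : ‖v‖ ≠ 0 := norm_ne_zero_iff.mpr hvne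
  -- normalized limit
  have hvn : ‖v‖⁻¹ • v = -(‖g‖⁻¹ • g) := by
    rw [hvdef, htv, norm_smul, Real.norm_eq_abs, abs_of_neg ht, smul_smul, ← neg_smul]
    congr 1
    have hgn : ‖g‖ ≠ 0 := norm_ne_zero_iff.mpr hg
    field_simp
    rw [div_self ht.ne]
  have hlim : Filter.Tendsto (fun r => ‖I r‖⁻¹ • I r) (nhdsWithin 0 (Set.Ioi 0))
      (nhds (-(‖g‖⁻¹ • g))) := by
    rw [← hvn]
    exact ((hIv.norm.inv₀ hvnorm)).smul hIv
  refine hlim.congr' ?_ |>.mono_left le_rfl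
  · filter_upwards [self_mem_nhdsWithin] with r hr
    have hr0 : (0:ℝ) < r := hr
    rw [aux_rescale h x hr0]
    have hC : 0 < ((P : ℝ) + 2) / r ^ 2 *
        ((volume (closedBall (0:EuclideanSpace ℝ (Fin P)) r)).toReal⁻¹ * (r ^ P * r)) := by
      have h1 : (0:ℝ) < ((P : ℝ) + 2) / r ^ 2 := by positivity
      have h2 : (0:ℝ) <
          (volume (closedBall (0:EuclideanSpace ℝ (Fin P)) r)).toReal :=
        ENNReal.toReal_pos (measure_closedBall_pos volume _ hr0).ne' measure_closedBall_lt_top.ne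
      have h3 : (0:ℝ) < r ^ P * r := by positivity
      positivity
    rw [aux_normalize hC]
end
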